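/- arXiv:1008.4495 — 6 statements merged into one kernel-verified Lean document; each statement's English description precedes it below -/
import Mathlib

section
/- Let G₁ and G₂ be torsion-free groups and G = G₁ * G₂ their free product. If g is a non-trivial element of G and there exists a positive integer k such that g^k belongs to (the canonical copy of) G₁, then g belongs to G₁. -/
/-!
Write a nontrivial `g` in a free product of groups as `g = u c u⁻¹` with `c` cyclically reduced:
either a single letter `x`, or a reduced word whose first and last letters lie in different
factors (conjugating by the first letter of a reduced word with equal end factors shortens it).

A conjugate `u y u⁻¹` of a nontrivial letter `y` is either a letter (if `u` lies in the factor of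
`y`) or has a reduced word of length at least three beginning and ending in the same factor.
Hence in the second case every power `cⁿ`, which is again reduced with distinct end factors, is
not conjugate into a factor, so `gⁿ` cannot lie in `G₁`. In the first case `xⁿ ≠ 1` by
torsion-freeness, and `u xⁿ u⁻¹ ∈ G₁` forces `x ∈ G₁` and `u ∈ G₁`, so `g ∈ G₁`.
-/

open scoped Monoid.Coprod
/-- Old Mathlib's `Monoid.IsTorsionFree` (removed), restored with its old definition. -/
def Monoid.IsTorsionFree (G : Type*) [Monoid G] : Prop :=
  ∀ g : G, g ≠ 1 → ¬IsOfFinOrder g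

namespace Monoid.CoprodI

variable {ι : Type*}

section Monoid

variable {M : ι → Type*} [∀ i, Monoid (M i)]

namespace NeWord

theorem toList_eq_of_prod_eq {i j k l : ι} {w₁ : NeWord M i j} {w₂ : NeWord M k l}
    (h : w₁.prod = w₂.prod) : w₁.toList = w₂.toList := by
  classical
  exact congrArg Word.toList (Word.equiv.symm.injective h)

theorem index_eq_of_prod_eq {i j k l : ι} {w₁ : NeWord M i j} {w₂ : NeWord M k l}
    (h : w₁.prod = w₂.prod) : i = k ∧ j = l := by
  have hlist := toList_eq_of_prod_eq h
  have hhead := congrArg List.head? hlist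
  have hlast := congrArg List.getLast? hlist
  simp only [toList_head?, toList_getLast?, Option.some.injEq, Sigma.mk.injEq] at hhead hlast
  exact ⟨hhead.1, hlast.1⟩

theorem prod_ne_one {i j : ι} (w : NeWord M i j) : w.prod ≠ 1 := by
  classical
  intro h
  have hw : w.toWord = Word.empty := Word.equiv.symm.injective (h.trans Word.prod_empty.symm)
  exact w.toList_ne_nil (congrArg Word.toList hw)

theorem prod_eq_of_head_or_exists_tail {i j : ι} (w : NeWord M i j) :
    (i = j ∧ w.prod = of w.head) ∨ ∃ (k : ι) (w' : NeWord M k j), k ≠ i ∧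
      w'.toList.length < w.toList.length ∧ w.prod = of w.head * w'.prod := by
  induction w with
  | singleton x hx => exact Or.inl ⟨rfl, prod_singleton x hx⟩
  | append w₁ hne w₂ ih₁ _ =>
    right
    have hlen₁ := List.length_pos_iff.mpr w₁.toList_ne_nil
    rcases ih₁ with ⟨rfl, h⟩ | ⟨k, w', hk, hlen, h⟩
    · exact ⟨_, w₂, hne.symm, by simp only [toList, List.length_append]; omega,
        by rw [append_prod, h, append_head]⟩
    · exact ⟨k, w'.append hne w₂, hk, by simp only [toList, List.length_append]; omega,
        by rw [append_prod, h, append_prod, mul_assoc, append_head]⟩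

theorem prod_eq_of_last_or_exists_init {i j : ι} (w : NeWord M i j) :
    (i = j ∧ w.prod = of w.last) ∨ ∃ (k : ι) (w' : NeWord M i k), k ≠ j ∧
      w'.toList.length < w.toList.length ∧ w.prod = w'.prod * of w.last := by
  induction w with
  | singleton x hx => exact Or.inl ⟨rfl, prod_singleton x hx⟩
  | append w₁ hne w₂ _ ih₂ =>
    right
    have hlen₂ := List.length_pos_iff.mpr w₂.toList_ne_nil
    rcases ih₂ with ⟨rfl, h⟩ | ⟨k, w', hk, hlen, h⟩
    · exact ⟨_, w₁, hne, by simp only [toList, List.length_append]; omega,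
        by rw [append_prod, h, append_last]⟩
    · exact ⟨k, w₁.append hne w', hk, by simp only [toList, List.length_append]; omega,
        by rw [append_prod, h, append_prod, mul_assoc, append_last]⟩

theorem exists_prod_eq_pow {i j : ι} (w : NeWord M i j) (hij : i ≠ j) :
    ∀ {n : ℕ}, n ≠ 0 → ∃ w' : NeWord M i j, w'.prod = w.prod ^ n
  | 0, hn => absurd rfl hn
  | 1, _ => ⟨w, (pow_one _).symm⟩
  | n + 2, _ => by
    obtain ⟨w', hw'⟩ := exists_prod_eq_pow w hij n.succ_ne_zero
    exact ⟨w.append hij.symm w', by rw [append_prod, hw', ← pow_succ']⟩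

end NeWord

theorem exists_neWord_prod_eq {g : CoprodI M} (hg : g ≠ 1) :
    ∃ (i j : ι) (w : NeWord M i j), w.prod = g := by
  classical
  have hne : Word.equiv g ≠ Word.empty := fun h =>
    hg (by rw [← Word.equiv.symm_apply_apply g, h]; exact Word.prod_empty)
  obtain ⟨i, j, w, hw⟩ := NeWord.of_word _ hne
  exact ⟨i, j, w, by rw [NeWord.prod, hw]; exact Word.equiv.symm_apply_apply g⟩

end Monoid

variable {G : ι → Type*} [∀ i, Group (G i)]

theorem NeWord.exists_prod_eq_conj {i j k : ι} (w : NeWord G i j) {y : G k} (hy : y ≠ 1)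
    (hik : i ≠ k) :
    ∃ w' : NeWord G j j, 2 ≤ w'.toList.length ∧ w'.prod = w.prod⁻¹ * of y * w.prod := by
  refine ⟨(w.inv.append hik (.singleton y hy)).append hik.symm w, ?_, by simp⟩
  have := List.length_pos_iff.mpr w.toList_ne_nil
  simp only [NeWord.toList, List.length_append, List.length_cons, List.length_nil]
  omega

theorem mem_range_or_exists_neWord_prod_eq_conj (u : CoprodI G) {k : ι} {y : G k}
    (hy : y ≠ 1) :
    u ∈ (of : G k →* CoprodI G).range ∨
      ∃ (i : ι) (w : NeWord G i i), 2 ≤ w.toList.length ∧ w.prod = u⁻¹ * of y * u := by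
  rcases eq_or_ne u 1 with rfl | hu
  · exact Or.inl (one_mem _)
  obtain ⟨i, j, w, rfl⟩ := exists_neWord_prod_eq hu
  by_cases hik : i = k
  · subst hik
    rcases w.prod_eq_of_head_or_exists_tail with ⟨-, h⟩ | ⟨i', w', hi', -, h⟩
    · exact Or.inl ⟨w.head, h.symm⟩
    · have hy' : w.head⁻¹ * y * w.head ≠ 1 := by
        simpa using (conj_eq_one_iff (a := w.head⁻¹)).not.mpr hy
      obtain ⟨w'', hlen, hprod⟩ := w'.exists_prod_eq_conj hy' hi'
      refine Or.inr ⟨j, w'', hlen, ?_⟩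
      rw [hprod, h, map_mul, map_mul, map_inv]
      group
  · exact Or.inr ⟨j, w.exists_prod_eq_conj hy hik⟩

theorem index_eq_and_mem_range_of_conj_eq {j k : ι} {x : G j} (hx : x ≠ 1) {y : G k}
    {u : CoprodI G} (h : u * of x * u⁻¹ = of y) :
    j = k ∧ u ∈ (of : G k →* CoprodI G).range := by
  have hy : y ≠ 1 := by
    rintro rfl
    rw [map_one, conj_eq_one_iff, ← map_one of] at h
    exact hx (of_injective j h)
  have hx' : of x = u⁻¹ * of y * u := by rw [← h]; group
  rcases mem_range_or_exists_neWord_prod_eq_conj u hy with hu | ⟨i, w, hlen, hw⟩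
  · obtain ⟨c, rfl⟩ := hu
    have hy' : c⁻¹ * y * c ≠ 1 := by
      simpa using (conj_eq_one_iff (a := c⁻¹)).not.mpr hy
    refine ⟨(NeWord.index_eq_of_prod_eq (w₁ := .singleton x hx) (w₂ := .singleton _ hy') ?_).1,
      ⟨c, rfl⟩⟩
    simp [hx']
  · rw [← hx', ← NeWord.prod_singleton x hx] at hw
    rw [NeWord.toList_eq_of_prod_eq hw] at hlen
    simp at hlen

theorem conj_prod_notMem_range {i j k : ι} (v : NeWord G i j) (hij : i ≠ j) (u : CoprodI G) :
    u * v.prod * u⁻¹ ∉ (of : G k →* CoprodI G).range := by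
  rintro ⟨y, hy⟩
  have hy1 : y ≠ 1 := by
    rintro rfl
    rw [map_one, eq_comm, conj_eq_one_iff] at hy
    exact v.prod_ne_one hy
  have hv : v.prod = u⁻¹ * of y * u := by rw [hy]; group
  rcases mem_range_or_exists_neWord_prod_eq_conj u hy1 with ⟨c, rfl⟩ | ⟨l, w, -, hw⟩
  · have hy' : c⁻¹ * y * c ≠ 1 := by
      simpa using (conj_eq_one_iff (a := c⁻¹)).not.mpr hy1
    have := NeWord.index_eq_of_prod_eq (w₁ := v) (w₂ := .singleton _ hy') (by simp [hv])
    exact hij (this.1.trans this.2.symm)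
  · have := NeWord.index_eq_of_prod_eq (hw.trans hv.symm)
    exact hij (this.1.symm.trans this.2)

def IsCyclicallyReduced (g : CoprodI G) : Prop :=
  (∃ (k : ι) (x : G k), x ≠ 1 ∧ g = of x) ∨ ∃ (k l : ι) (v : NeWord G k l), k ≠ l ∧ g = v.prod

theorem NeWord.exists_conj_isCyclicallyReduced {i j : ι} (w : NeWord G i j) :
    ∃ u c : CoprodI G, IsCyclicallyReduced c ∧ w.prod = u * c * u⁻¹ := by
  induction hn : w.toList.length using Nat.strong_induction_on generalizing i j with
  | _ n ih =>
    rcases ne_or_eq i j with hij | rfl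
    · exact ⟨1, w.prod, Or.inr ⟨i, j, w, hij, rfl⟩, by simp⟩
    rcases w.prod_eq_of_head_or_exists_tail with ⟨-, h⟩ | ⟨k, w', hk, hlen', h⟩
    · have hx : w.head ≠ 1 := fun h1 => w.prod_ne_one (by rw [h, h1, map_one])
      exact ⟨1, w.prod, Or.inl ⟨i, w.head, hx, h⟩, by simp⟩
    rcases w'.prod_eq_of_last_or_exists_init with ⟨rfl, -⟩ | ⟨l, w'', hl, hlen'', h'⟩
    · exact absurd rfl hk
    have hconj : w.prod = of w.head * (w''.prod * of (w'.last * w.head)) * (of w.head)⁻¹ := by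
      rw [h, h', map_mul]
      group
    by_cases hba : w'.last * w.head = 1
    · obtain ⟨u, c, hc, hu⟩ := ih _ (by omega) w'' rfl
      exact ⟨of w.head * u, c, hc, by rw [hconj, hba, map_one, mul_one, hu]; group⟩
    · refine ⟨of w.head, _, Or.inr ⟨k, i, w''.append hl (.singleton _ hba), hk, rfl⟩, ?_⟩
      rw [hconj, NeWord.append_prod, NeWord.prod_singleton]

theorem exists_conj_isCyclicallyReduced {g : CoprodI G} (hg : g ≠ 1) :
    ∃ u c : CoprodI G, IsCyclicallyReduced c ∧ g = u * c * u⁻¹ := by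
  obtain ⟨i, j, w, rfl⟩ := exists_neWord_prod_eq hg
  exact w.exists_conj_isCyclicallyReduced

theorem mem_range_of_pow_mem_range (htf : ∀ i, IsTorsionFree (G i)) {g : CoprodI G} {n : ℕ}
    (hn : n ≠ 0) {k : ι} (hgn : g ^ n ∈ (of : G k →* CoprodI G).range) :
    g ∈ (of : G k →* CoprodI G).range := by
  rcases eq_or_ne g 1 with rfl | hg
  · exact one_mem _
  obtain ⟨u, c, hc, rfl⟩ := exists_conj_isCyclicallyReduced hg
  rw [conj_pow] at hgn
  rcases hc with ⟨j, x, hx, rfl⟩ | ⟨i, j, v, hij, rfl⟩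
  · obtain ⟨y, hy⟩ := hgn
    have hxn : x ^ n ≠ 1 := fun h =>
      htf j x hx (isOfFinOrder_iff_pow_eq_one.mpr ⟨n, Nat.pos_of_ne_zero hn, h⟩)
    rw [← map_pow] at hy
    obtain ⟨rfl, c, rfl⟩ := index_eq_and_mem_range_of_conj_eq hxn hy.symm
    exact ⟨c * x * c⁻¹, by simp⟩
  · obtain ⟨v', hv'⟩ := v.exists_prod_eq_pow hij hn
    exact absurd hgn (hv' ▸ conj_prod_notMem_range v' hij u)

end Monoid.CoprodI

theorem Monoid.IsTorsionFree.of_injective {G H : Type*} [Monoid G] [Monoid H] {f : G →* H}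
    (hf : Function.Injective f) (hH : IsTorsionFree H) : IsTorsionFree G :=
  fun g hg hfin => hH (f g) (by rwa [ne_eq, ← map_one f, hf.eq_iff]) (f.isOfFinOrder hfin)

namespace Monoid.Coprod

universe u v

variable (G₁ : Type u) (G₂ : Type v) [Group G₁] [Group G₂]

def factor : Bool → Type (max u v)
  | false => ULift.{v} G₁
  | true => ULift.{u} G₂

instance : ∀ b, Group (factor G₁ G₂ b)
  | false => inferInstanceAs (Group (ULift G₁))
  | true => inferInstanceAs (Group (ULift G₂))

def toCoprodI : G₁ ∗ G₂ →* CoprodI (factor G₁ G₂) :=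
  lift ((CoprodI.of (i := false)).comp MulEquiv.ulift.symm.toMonoidHom)
    ((CoprodI.of (i := true)).comp MulEquiv.ulift.symm.toMonoidHom)

def ofCoprodI : CoprodI (factor G₁ G₂) →* G₁ ∗ G₂ :=
  CoprodI.lift fun
    | false => inl.comp MulEquiv.ulift.toMonoidHom
    | true => inr.comp MulEquiv.ulift.toMonoidHom

theorem ofCoprodI_comp_toCoprodI :
    (ofCoprodI G₁ G₂).comp (toCoprodI G₁ G₂) = MonoidHom.id _ := by
  apply hom_ext <;> ext <;> rfl

theorem range_inl_eq_comap_toCoprodI :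
    (inl : G₁ →* G₁ ∗ G₂).range =
      (CoprodI.of : factor G₁ G₂ false →* _).range.comap (toCoprodI G₁ G₂) := by
  ext g
  constructor
  · rintro ⟨x, rfl⟩
    exact ⟨ULift.up x, rfl⟩
  · rintro ⟨x, hx⟩
    refine ⟨x.down, ?_⟩
    rw [← MonoidHom.id_apply _ g, ← ofCoprodI_comp_toCoprodI, MonoidHom.comp_apply, ← hx]
    rfl

theorem isTorsionFree_factor (h₁ : IsTorsionFree G₁) (h₂ : IsTorsionFree G₂) :
    ∀ b, IsTorsionFree (factor G₁ G₂ b)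
  | false => h₁.of_injective (f := (MulEquiv.ulift (α := G₁)).toMonoidHom) ULift.down_injective
  | true => h₂.of_injective (f := (MulEquiv.ulift (α := G₂)).toMonoidHom) ULift.down_injective

end Monoid.Coprod

theorem stmt_0_general {G₁ G₂ : Type*} [Group G₁] [Group G₂]
    (h₁ : Monoid.IsTorsionFree G₁) (h₂ : Monoid.IsTorsionFree G₂)
    (g : G₁ ∗ G₂) (k : ℕ) (hk : 0 < k)
    (hgk : g ^ k ∈ (Monoid.Coprod.inl : G₁ →* G₁ ∗ G₂).range) :
    g ∈ (Monoid.Coprod.inl : G₁ →* G₁ ∗ G₂).range := by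
  rw [Monoid.Coprod.range_inl_eq_comap_toCoprodI] at hgk ⊢
  rw [Subgroup.mem_comap, map_pow] at hgk
  exact Monoid.CoprodI.mem_range_of_pow_mem_range
    (Monoid.Coprod.isTorsionFree_factor G₁ G₂ h₁ h₂) hk.ne' hgk

/-- If `G₁` and `G₂` are torsion-free groups, `g` a nontrivial element of the free
product `G₁ ∗ G₂`, and `g ^ k` lies in the canonical copy of `G₁` for some `k > 0`,
then `g` lies in `G₁`. -/
theorem stmt_0 {G₁ G₂ : Type*} [Group G₁] [Group G₂]
    (h₁ : Monoid.IsTorsionFree G₁) (h₂ : Monoid.IsTorsionFree G₂)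
    (g : G₁ ∗ G₂) (hg : g ≠ 1) (k : ℕ) (hk : 0 < k)
    (hgk : g ^ k ∈ (Monoid.Coprod.inl : G₁ →* G₁ ∗ G₂).range) :
    g ∈ (Monoid.Coprod.inl : G₁ →* G₁ ∗ G₂).range :=
  stmt_0_general h₁ h₂ g k hk hgk
end

section
/- Let G₁ and G₂ be torsion-free groups, G = G₁ * G₂, and n a positive integer. Then G₁ ∩ Gⁿ = G₁ⁿ, where Gⁿ denotes the subgroup generated by all n-th powers of elements of G, and G₁ⁿ the subgroup of G₁ generated by n-th powers of elements of G₁. -/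
open scoped Monoid.Coprod
/-- For a group `K`, the subgroup generated by all `n`-th powers of elements of `K`. -/
def powSubgroup (K : Type*) [Group K] (n : ℕ) : Subgroup K :=
  Subgroup.closure {x : K | ∃ k : K, x = k ^ n}

lemma powSubgroup_map_le {K L : Type*} [Group K] [Group L] (f : K →* L) (n : ℕ) :
    (powSubgroup K n).map f ≤ powSubgroup L n := by
  rw [powSubgroup, MonoidHom.map_closure]
  apply Subgroup.closure_mono
  rintro _ ⟨_, ⟨k, rfl⟩, rfl⟩
  exact ⟨f k, map_pow f k n⟩

/-- Applying the retraction `r` to an element of `range f ⊓ Lⁿ` shows it lies in `f (Kⁿ)`. -/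
lemma range_inf_powSubgroup_eq_map_of_comp_eq_id {K L : Type*} [Group K] [Group L]
    (f : K →* L) (r : L →* K) (hrf : r.comp f = MonoidHom.id K) (n : ℕ) :
    f.range ⊓ powSubgroup L n = (powSubgroup K n).map f := by
  apply le_antisymm
  · rintro _ ⟨⟨k, rfl⟩, hk⟩
    have hrfk : r (f k) = k := DFunLike.congr_fun hrf k
    refine ⟨k, ?_, rfl⟩
    rw [← hrfk]
    exact powSubgroup_map_le r n ⟨f k, hk, rfl⟩
  · exact le_inf (Subgroup.map_le_range _ _) (powSubgroup_map_le f n)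

theorem stmt_1_general {G₁ G₂ : Type*} [Group G₁] [Group G₂]
    (n : ℕ) :
    (Monoid.Coprod.inl : G₁ →* G₁ ∗ G₂).range ⊓ powSubgroup (G₁ ∗ G₂) n
      = (powSubgroup G₁ n).map (Monoid.Coprod.inl : G₁ →* G₁ ∗ G₂) :=
  range_inf_powSubgroup_eq_map_of_comp_eq_id _ Monoid.Coprod.fst Monoid.Coprod.fst_comp_inl n

/-- If `G₁`, `G₂` are torsion-free and `G = G₁ ∗ G₂`, then `G₁ ∩ Gⁿ = G₁ⁿ`. -/
theorem stmt_1 {G₁ G₂ : Type*} [Group G₁] [Group G₂]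
    (h₁ : Monoid.IsTorsionFree G₁) (h₂ : Monoid.IsTorsionFree G₂)
    (n : ℕ) (hn : 0 < n) :
    (Monoid.Coprod.inl : G₁ →* G₁ ∗ G₂).range ⊓ powSubgroup (G₁ ∗ G₂) n
      = (powSubgroup G₁ n).map (Monoid.Coprod.inl : G₁ →* G₁ ∗ G₂) :=
  stmt_1_general n
end

section
/- Let F be a group, φ an automorphism of F, F₁ a φ-invariant subgroup, t with F = F₁ * ⟨t⟩, f ∈ F₁ with φ(t) = tf, and n, p₁ positive integers such that φ^{p₁} restricted to F₁ induces the identity on F₁/F₁ⁿ. Then φ^{n p₁}(t) ≡ t modulo Fⁿ; more precisely, in F/Fⁿ one has φ^{n p₁}(t) = t · [f φ(f) φ²(f) ⋯ φ^{p₁-1}(f)]ⁿ = t. -/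
instance powSubgroup_normal (K : Type*) [Group K] (n : ℕ) : (powSubgroup K n).Normal := by
  constructor
  intro x hx g
  have h : Subgroup.map (MulAut.conj g).toMonoidHom (powSubgroup K n) ≤ powSubgroup K n := by
    rw [powSubgroup, MonoidHom.map_closure]
    apply Subgroup.closure_mono
    rintro _ ⟨_, ⟨y, rfl⟩, rfl⟩
    exact ⟨MulAut.conj g y, by simp⟩
  simpa using h ⟨x, hx, rfl⟩

/-- The subgroup of `F` generated by the `n`-th powers of elements of a subgroup `F₁`. -/
def powSubgroupOf {F : Type*} [Group F] (F₁ : Subgroup F) (n : ℕ) : Subgroup F :=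
  Subgroup.closure {x : F | ∃ h ∈ F₁, x = h ^ n}

/-- Let `φ` be an automorphism of `F`, `F₁` a `φ`-invariant subgroup, `t ∈ F`, `f ∈ F₁`
with `φ(t) = t·f`, and `n, p₁ > 0` such that `φ^{p₁}` induces the identity on `F₁/F₁ⁿ`.
Then in `F/Fⁿ` one has `φ^{n p₁}(t) = t · (f φ(f) ⋯ φ^{p₁-1}(f))ⁿ = t`. -/
theorem stmt_6 {F : Type*} [Group F] (φ : MulAut F) (F₁ : Subgroup F)
    (hinv : ∀ x ∈ F₁, φ x ∈ F₁) (t f : F) (hf : f ∈ F₁) (hφt : φ t = t * f)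
    (n p₁ : ℕ) (hn : 0 < n) (hp₁ : 0 < p₁)
    (hid : ∀ h ∈ F₁, (φ ^ p₁) h * h⁻¹ ∈ powSubgroupOf F₁ n) :
    (QuotientGroup.mk ((φ ^ (n * p₁)) t) : F ⧸ powSubgroup F n)
        = QuotientGroup.mk (t * ((List.range p₁).map fun i => (φ ^ i) f).prod ^ n) ∧
      (QuotientGroup.mk ((φ ^ (n * p₁)) t) : F ⧸ powSubgroup F n)
        = QuotientGroup.mk t := by
  classical
  set c : F := ((List.range p₁).map fun i => (φ ^ i) f).prod with hc
  have hle : powSubgroupOf F₁ n ≤ powSubgroup F n := by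
    apply Subgroup.closure_mono
    rintro x ⟨h, _, rfl⟩
    exact ⟨h, rfl⟩
  -- powers of φ preserve F₁
  have hinv' : ∀ m : ℕ, ∀ x ∈ F₁, (φ ^ m) x ∈ F₁ := by
    intro m
    induction m with
    | zero => intro x hx; simpa using hx
    | succ m ih =>
      intro x hx
      rw [pow_succ, MulAut.mul_apply]
      exact ih _ (hinv x hx)
  have hcF₁ : c ∈ F₁ := by
    apply Subgroup.list_prod_mem
    intro x hx
    rcases List.mem_map.1 hx with ⟨i, _, rfl⟩
    exact hinv' i f hf
  -- the exact iteration formula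
  have key : ∀ q : ℕ, (φ ^ q) t = t * ((List.range q).map fun i => (φ ^ i) f).prod := by
    intro q
    induction q with
    | zero => simp
    | succ q ih =>
      rw [pow_succ, MulAut.mul_apply, hφt, map_mul, ih, List.range_succ]
      have h1 : (φ ^ q) f = (fun i => (φ ^ i) f) q := rfl
      simp [mul_assoc]
  -- images mod N
  have hmkfix : ∀ h ∈ F₁, (QuotientGroup.mk ((φ ^ p₁) h) : F ⧸ powSubgroup F n)
      = QuotientGroup.mk h := by
    intro h hh
    have h1 : (φ ^ p₁) h * h⁻¹ ∈ powSubgroup F n := hle (hid h hh)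
    have h2 : h * ((φ ^ p₁) h)⁻¹ ∈ powSubgroup F n := by
      simpa [mul_inv_rev] using (powSubgroup F n).inv_mem h1
    have h3 := (powSubgroup_normal F n).conj_mem _ h2 (((φ ^ p₁) h)⁻¹)
    rw [QuotientGroup.eq]
    simpa [mul_assoc] using h3
  have hfix : ∀ j : ℕ, (QuotientGroup.mk ((φ ^ (j * p₁)) c) : F ⧸ powSubgroup F n)
      = QuotientGroup.mk c := by
    intro j
    induction j with
    | zero => simp
    | succ j ih =>
      have hrw : (φ ^ ((j + 1) * p₁)) c = (φ ^ p₁) ((φ ^ (j * p₁)) c) := by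
        rw [add_mul, one_mul, add_comm, pow_add, MulAut.mul_apply]
      rw [hrw, hmkfix _ (hinv' _ _ hcF₁), ih]
  -- product over range (m * p₁) is c^m mod N
  have hprod : ∀ m : ℕ,
      (QuotientGroup.mk (((List.range (m * p₁)).map fun i => (φ ^ i) f).prod)
        : F ⧸ powSubgroup F n) = (QuotientGroup.mk c) ^ m := by
    intro m
    induction m with
    | zero => simp
    | succ m ih =>
      have hsplit : List.range ((m + 1) * p₁)
          = List.range (m * p₁) ++ (List.range p₁).map (m * p₁ + ·) := by
        rw [add_mul, one_mul, List.range_add]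
      have h2 : (((List.range p₁).map (m * p₁ + ·)).map fun i => (φ ^ i) f).prod
          = (φ ^ (m * p₁)) c := by
        rw [List.map_map, hc]
        have : ((fun i => (φ ^ i) f) ∘ (m * p₁ + ·))
            = (⇑(φ ^ (m * p₁))) ∘ (fun i => (φ ^ i) f) := by
          funext k
          simp [Function.comp, pow_add, MulAut.mul_apply]
        rw [this, ← List.map_map]
        exact (map_list_prod (φ ^ (m * p₁)) _).symm
      rw [hsplit, List.map_append, List.prod_append, h2, QuotientGroup.mk_mul, ih,
        hfix m, pow_succ]
  have main : (QuotientGroup.mk ((φ ^ (n * p₁)) t) : F ⧸ powSubgroup F n)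
      = QuotientGroup.mk (t * c ^ n) := by
    rw [key (n * p₁), QuotientGroup.mk_mul, QuotientGroup.mk_mul, hprod n,
      QuotientGroup.mk_pow]
  refine ⟨main, main.trans ?_⟩
  have hcn : (c ^ n : F) ∈ powSubgroup F n := Subgroup.subset_closure ⟨c, rfl⟩
  rw [QuotientGroup.mk_mul, (QuotientGroup.eq_one_iff _).2 hcn, mul_one]
end

section
/- Let X be a δ-hyperbolic geodesic space and Y, Z two α-quasi-convex subsets of X. Then for every A > 0, diam(Y^{+A} ∩ Z^{+A}) ≤ diam(Y^{+α+10δ} ∩ Z^{+α+10δ}) + 2A + 20δ. -/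
/-- `X` is `δ`-hyperbolic in the sense of Gromov (four-point condition). -/
def GromovHyperbolic (X : Type*) [MetricSpace X] (δ : ℝ) : Prop :=
  ∀ x y z w : X,
    dist x z + dist y w ≤ max (dist x y + dist z w) (dist x w + dist y z) + 2 * δ

/-- `γ` is a geodesic from `x` to `y`, parametrized by arclength on `[0, dist x y]`. -/
def IsGeodesicFromTo {X : Type*} [MetricSpace X] (γ : ℝ → X) (x y : X) : Prop :=
  γ 0 = x ∧ γ (dist x y) = y ∧
    ∀ s ∈ Set.Icc (0 : ℝ) (dist x y), ∀ t ∈ Set.Icc (0 : ℝ) (dist x y),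
      dist (γ s) (γ t) = |s - t|

/-- `X` is a geodesic space. -/
def GeodesicSpace (X : Type*) [MetricSpace X] : Prop :=
  ∀ x y : X, ∃ γ : ℝ → X, IsGeodesicFromTo γ x y

/-- `Y` is `α`-quasi-convex: every geodesic between two points of `Y` stays in the
`α`-neighbourhood of `Y`. -/
def QuasiConvex {X : Type*} [MetricSpace X] (α : ℝ) (Y : Set X) : Prop :=
  ∀ x ∈ Y, ∀ y ∈ Y, ∀ γ : ℝ → X, IsGeodesicFromTo γ x y →
    ∀ s ∈ Set.Icc (0 : ℝ) (dist x y), Metric.infDist (γ s) Y ≤ α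

/-- The closed `A`-neighbourhood of a subset. -/
def nbhd {X : Type*} [MetricSpace X] (Y : Set X) (A : ℝ) : Set X :=
  {x : X | Metric.infDist x Y ≤ A}

section Aux

open Set Metric

variable {X : Type*} [MetricSpace X] {γ : ℝ → X} {x y : X}

lemma geod_dist_left (hγ : IsGeodesicFromTo γ x y) {s : ℝ}
    (hs : s ∈ Icc (0:ℝ) (dist x y)) : dist (γ s) x = s := by
  have h0 : (0:ℝ) ∈ Icc (0:ℝ) (dist x y) := ⟨le_refl 0, dist_nonneg⟩
  have h := hγ.2.2 s hs 0 h0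
  rw [hγ.1] at h
  rw [h, sub_zero, abs_of_nonneg hs.1]

lemma geod_dist_right (hγ : IsGeodesicFromTo γ x y) {s : ℝ}
    (hs : s ∈ Icc (0:ℝ) (dist x y)) : dist (γ s) y = dist x y - s := by
  have hL : dist x y ∈ Icc (0:ℝ) (dist x y) := ⟨dist_nonneg, le_refl _⟩
  have h := hγ.2.2 s hs (dist x y) hL
  rw [hγ.2.1] at h
  rw [h, abs_of_nonpos (by linarith [hs.2])]
  ring

lemma IsGeodesicFromTo.rev (hγ : IsGeodesicFromTo γ x y) :
    IsGeodesicFromTo (fun s => γ (dist x y - s)) y x := by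
  have hd : dist y x = dist x y := dist_comm y x
  refine ⟨by simpa using hγ.2.1, ?_, ?_⟩
  · rw [hd]; simpa using hγ.1
  · intro s hs t ht
    rw [hd] at hs ht
    have h1 : dist x y - s ∈ Icc (0:ℝ) (dist x y) := ⟨by linarith [hs.2], by linarith [hs.1]⟩
    have h2 : dist x y - t ∈ Icc (0:ℝ) (dist x y) := ⟨by linarith [ht.2], by linarith [ht.1]⟩
    simp only []
    rw [hγ.2.2 _ h1 _ h2]
    have : dist x y - s - (dist x y - t) = t - s := by ring
    rw [this, abs_sub_comm]

/-- Slim-triangle dichotomy from the four-point condition. -/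
lemma lemA' {δ : ℝ} (hhyp : GromovHyperbolic X δ) (hγ : IsGeodesicFromTo γ x y)
    {t : ℝ} (ht : t ∈ Icc (0:ℝ) (dist x y)) (z : X) :
    dist (γ t) x + dist (γ t) z ≤ dist x z + 2*δ ∨
    dist (γ t) y + dist (γ t) z ≤ dist y z + 2*δ := by
  have h := hhyp (γ t) x z y
  have h1 : dist (γ t) x = t := geod_dist_left hγ ht
  have h2 : dist (γ t) y = dist x y - t := geod_dist_right hγ ht
  have hzy : dist z y = dist y z := dist_comm z y
  rcases le_total (dist (γ t) x + dist z y) (dist (γ t) y + dist x z) with h'|h'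
  · left; rw [max_eq_right h'] at h; linarith
  · right; rw [max_eq_left h'] at h; linarith

/-- A point with small Gromov product `(a|b)_p` is `4δ`-close to any geodesic `[a,b]`. -/
lemma lemA {δ : ℝ} (hδ : 0 ≤ δ) (hhyp : GromovHyperbolic X δ)
    {a b : X} {σ : ℝ → X} (hσ : IsGeodesicFromTo σ a b) {p : X}
    (h : dist p a + dist p b ≤ dist a b + 2*δ) :
    ∃ s ∈ Icc (0:ℝ) (dist a b), dist p (σ s) ≤ 4*δ := by
  by_cases hc : dist p a ≤ dist a b
  · have hs : dist p a ∈ Icc (0:ℝ) (dist a b) := ⟨dist_nonneg, hc⟩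
    refine ⟨dist p a, hs, ?_⟩
    have h1 : dist (σ (dist p a)) a = dist p a := geod_dist_left hσ hs
    have h2 : dist (σ (dist p a)) b = dist a b - dist p a := geod_dist_right hσ hs
    have h4 := hhyp p a (σ (dist p a)) b
    have hca : dist a (σ (dist p a)) = dist p a := by rw [dist_comm]; exact h1
    rcases le_total (dist p a + dist (σ (dist p a)) b)
        (dist p b + dist a (σ (dist p a))) with h'|h'
    · rw [max_eq_right h'] at h4; linarith
    · rw [max_eq_left h'] at h4; linarith
  · push_neg at hc
    refine ⟨dist a b, ⟨dist_nonneg, le_refl _⟩, ?_⟩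
    rw [hσ.2.1]
    linarith

/-- Key estimate: a point deep inside a geodesic between two points that are `B`-close
to a quasi-convex set is `(α+8δ)`-close to the set. -/
lemma lemB {δ : ℝ} (hδ : 0 ≤ δ) (hhyp : GromovHyperbolic X δ)
    (hgeo : GeodesicSpace X) {α : ℝ} {Y : Set X} (hY : QuasiConvex α Y)
    (hγ : IsGeodesicFromTo γ x y)
    {B : ℝ} {w1 w2 : X} (hw1 : w1 ∈ Y) (hw2 : w2 ∈ Y)
    (h1 : dist x w1 ≤ B) (h2 : dist y w2 ≤ B)
    {t : ℝ} (ht : t ∈ Icc (0:ℝ) (dist x y)) (ht1 : B + 8*δ < t)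
    (ht2 : B + 4*δ < dist x y - t) :
    Metric.infDist (γ t) Y ≤ α + 8*δ := by
  have hpx : dist (γ t) x = t := geod_dist_left hγ ht
  have hpy : dist (γ t) y = dist x y - t := geod_dist_right hγ ht
  rcases lemA' hhyp hγ ht w2 with hc | hc
  · obtain ⟨σ1, hσ1⟩ := hgeo x w2
    obtain ⟨s, hs, hps⟩ := lemA hδ hhyp hσ1 hc
    rcases lemA' hhyp hσ1 hs w1 with hd | hd
    · obtain ⟨σa, hσa⟩ := hgeo x w1
      obtain ⟨u, hu, hqu⟩ := lemA hδ hhyp hσa hd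
      have hux : dist (σa u) x = u := geod_dist_left hσa hu
      have t1 := dist_triangle (γ t) (σ1 s) (σa u)
      have t2 := dist_triangle (γ t) (σa u) x
      exfalso; linarith [hu.2]
    · obtain ⟨σb, hσb⟩ := hgeo w2 w1
      obtain ⟨u, hu, hqu⟩ := lemA hδ hhyp hσb hd
      have hq : Metric.infDist (σb u) Y ≤ α := hY w2 hw2 w1 hw1 σb hσb u hu
      have h5 : Metric.infDist (γ t) Y ≤ Metric.infDist (σb u) Y + dist (γ t) (σb u) :=
        Metric.infDist_le_infDist_add_dist
      have t1 := dist_triangle (γ t) (σ1 s) (σb u)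
      linarith
  · obtain ⟨σ2, hσ2⟩ := hgeo y w2
    obtain ⟨s, hs, hps⟩ := lemA hδ hhyp hσ2 hc
    have hsy : dist (σ2 s) y = s := geod_dist_left hσ2 hs
    have t1 := dist_triangle (γ t) (σ2 s) y
    exfalso
    linarith [hs.2]

end Aux

/-- If `Y`, `Z` are `α`-quasi-convex subsets of a `δ`-hyperbolic geodesic space, then
for every `A > 0`,
`diam(Y^{+A} ∩ Z^{+A}) ≤ diam(Y^{+α+10δ} ∩ Z^{+α+10δ}) + 2A + 20δ`. -/
theorem stmt_10 {X : Type*} [MetricSpace X] (δ : ℝ) (hδ : 0 ≤ δ)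
    (hhyp : GromovHyperbolic X δ) (hgeo : GeodesicSpace X)
    (α : ℝ) (hα : 0 ≤ α) (Y Z : Set X)
    (hY : QuasiConvex α Y) (hZ : QuasiConvex α Z) (A : ℝ) (hA : 0 < A) :
    EMetric.diam (nbhd Y A ∩ nbhd Z A)
      ≤ EMetric.diam (nbhd Y (α + 10 * δ) ∩ nbhd Z (α + 10 * δ))
        + ENNReal.ofReal (2 * A + 20 * δ) := by
  apply EMetric.diam_le
  intro x hx y hy
  rcases eq_top_or_lt_top
      (EMetric.diam (nbhd Y (α + 10 * δ) ∩ nbhd Z (α + 10 * δ))) with hT | hT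
  · rw [hT]; exact le_top.trans le_self_add
  have hDfin : EMetric.diam (nbhd Y (α + 10 * δ) ∩ nbhd Z (α + 10 * δ)) ≠ ⊤ := hT.ne
  set D := (EMetric.diam (nbhd Y (α + 10 * δ) ∩ nbhd Z (α + 10 * δ))).toReal with hDdef
  clear_value D
  have hD0 : 0 ≤ D := by rw [hDdef]; exact ENNReal.toReal_nonneg
  have hxY : Metric.infDist x Y ≤ A := hx.1
  have hxZ : Metric.infDist x Z ≤ A := hx.2
  have hyY : Metric.infDist y Y ≤ A := hy.1
  have hyZ : Metric.infDist y Z ≤ A := hy.2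
  have key : dist x y ≤ D + (2 * A + 20 * δ) := by
    refine le_of_forall_pos_le_add fun ε hε => ?_
    by_cases hd : dist x y ≤ 2*A + 20*δ + ε
    · linarith
    push_neg at hd
    set t := A + 8*δ + ε/2 with htdef
    clear_value t
    have H : ∀ (x' y' : X) (γ' : ℝ → X), IsGeodesicFromTo γ' x' y' →
        dist x' y' = dist x y →
        ∀ W : Set X, QuasiConvex α W → Metric.infDist x' W ≤ A →
        Metric.infDist y' W ≤ A → Metric.infDist (γ' t) W ≤ α + 8*δ := by
      intro x' y' γ' hγ' hdd W hW hxW hyW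
      rcases W.eq_empty_or_nonempty with rfl | hne
      · rw [Metric.infDist_empty]; linarith
      have h1 : Metric.infDist x' W < A + ε/4 := lt_of_le_of_lt hxW (by linarith)
      have h2 : Metric.infDist y' W < A + ε/4 := lt_of_le_of_lt hyW (by linarith)
      obtain ⟨w1, hw1, hd1⟩ := (Metric.infDist_lt_iff hne).1 h1
      obtain ⟨w2, hw2, hd2⟩ := (Metric.infDist_lt_iff hne).1 h2
      refine lemB hδ hhyp hgeo hW hγ' hw1 hw2 hd1.le hd2.le ?_ ?_ ?_
      · rw [hdd]; exact ⟨by linarith, by linarith⟩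
      · linarith
      · rw [hdd]; linarith
    obtain ⟨γ, hγ⟩ := hgeo x y
    have hrev := hγ.rev
    have hdyx : dist y x = dist x y := dist_comm y x
    have hpY : Metric.infDist (γ t) Y ≤ α + 8*δ := H x y γ hγ rfl Y hY hxY hyY
    have hpZ : Metric.infDist (γ t) Z ≤ α + 8*δ := H x y γ hγ rfl Z hZ hxZ hyZ
    have hp'Y : Metric.infDist (γ (dist x y - t)) Y ≤ α + 8*δ := by
      have := H y x _ hrev hdyx Y hY hyY hxY
      simpa using this
    have hp'Z : Metric.infDist (γ (dist x y - t)) Z ≤ α + 8*δ := by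
      have := H y x _ hrev hdyx Z hZ hyZ hxZ
      simpa using this
    have hpT : γ t ∈ nbhd Y (α + 10 * δ) ∩ nbhd Z (α + 10 * δ) := by
      constructor
      · show Metric.infDist (γ t) Y ≤ α + 10 * δ; linarith
      · show Metric.infDist (γ t) Z ≤ α + 10 * δ; linarith
    have hp'T : γ (dist x y - t) ∈ nbhd Y (α + 10 * δ) ∩ nbhd Z (α + 10 * δ) := by
      constructor
      · show Metric.infDist (γ (dist x y - t)) Y ≤ α + 10 * δ; linarith
      · show Metric.infDist (γ (dist x y - t)) Z ≤ α + 10 * δ; linarith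
    have htI : t ∈ Set.Icc (0:ℝ) (dist x y) := ⟨by linarith, by linarith⟩
    have htI' : dist x y - t ∈ Set.Icc (0:ℝ) (dist x y) := ⟨by linarith, by linarith⟩
    have hpp' : dist (γ t) (γ (dist x y - t)) = dist x y - 2*t := by
      have h := hγ.2.2 t htI (dist x y - t) htI'
      rw [h, abs_of_nonpos (by linarith)]
      ring
    have hle : dist (γ t) (γ (dist x y - t)) ≤ D := by
      have hedist := EMetric.edist_le_diam_of_mem hpT hp'T
      rw [dist_edist, hDdef]
      exact (ENNReal.toReal_le_toReal (edist_ne_top _ _) hDfin).2 hedist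
    linarith [hpp' ▸ hle]
  calc edist x y = ENNReal.ofReal (dist x y) := edist_dist x y
    _ ≤ ENNReal.ofReal (D + (2*A + 20*δ)) := ENNReal.ofReal_le_ofReal key
    _ = ENNReal.ofReal D + ENNReal.ofReal (2*A + 20*δ) :=
        ENNReal.ofReal_add hD0 (by linarith)
    _ = _ := by rw [hDdef, ENNReal.ofReal_toReal hDfin]
end

section
/- Let g be a hyperbolic isometry of a proper geodesic δ-hyperbolic space X, and let σ be a bi-infinite geodesic joining the two fixed points g⁻ and g⁺ of g on the boundary ∂X. If Y is an α-quasi-convex subset of X that is g-invariant, then σ is contained in the (α + 8δ)-neighbourhood of Y. -/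
open Filter

/-- A bi-infinite geodesic: an isometric embedding of `ℝ`. -/
def IsGeodesicLine {X : Type*} [MetricSpace X] (σ : ℝ → X) : Prop :=
  ∀ s t : ℝ, dist (σ s) (σ t) = |s - t|

section Aux

open Metric

variable {X : Type*} [MetricSpace X] {δ : ℝ}

/-- The Gromov product. -/
noncomputable def gp (p x y : X) : ℝ := (dist p x + dist p y - dist x y) / 2

lemma gp_comm (p x y : X) : gp p x y = gp p y x := by
  simp only [gp, dist_comm y x]; ring

lemma gp_nonneg (p x y : X) : 0 ≤ gp p x y := by
  have h := dist_triangle x p y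
  simp only [gp]
  have h1 : dist x p = dist p x := dist_comm x p
  linarith

lemma gp_le_dist (p x y : X) : gp x p y ≤ dist x y := by
  have h : dist x p ≤ dist x y + dist y p := dist_triangle x y p
  simp only [gp]
  have h2 : dist y p = dist p y := dist_comm y p
  linarith

lemma gp_ge (p x y : X) : dist p x - dist x y ≤ gp p x y := by
  have h : dist p x ≤ dist p y + dist y x := dist_triangle p y x
  simp only [gp]
  have h2 : dist y x = dist x y := dist_comm y x
  linarith

lemma gp_perturb (p x y x' y' : X) : gp p x y ≤ gp p x' y' + dist x x' + dist y y' := by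
  have h1 : dist p x ≤ dist p x' + dist x' x := dist_triangle p x' x
  have h2 : dist p y ≤ dist p y' + dist y' y := dist_triangle p y' y
  have h4 : dist x' y ≤ dist x' x + dist x y := dist_triangle x' x y
  have h3 : dist x' y' ≤ dist x' y + dist y y' := dist_triangle x' y y'
  simp only [gp]
  have e1 : dist x' x = dist x x' := dist_comm _ _
  have e2 : dist y' y = dist y y' := dist_comm _ _
  linarith

lemma gp_hyp (hhyp : GromovHyperbolic X δ) (w x y z : X) :
    min (gp w x z) (gp w z y) ≤ gp w x y + δ := by
  have h := hhyp x z y w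
  have e1 : dist z w = dist w z := dist_comm _ _
  have e2 : dist y w = dist w y := dist_comm _ _
  have e3 : dist x w = dist w x := dist_comm _ _
  have e4 : dist z y = dist y z := dist_comm _ _
  rcases le_total (dist x z + dist y w) (dist x w + dist z y) with hm | hm
  · rw [max_eq_right hm] at h
    rcases le_total (gp w x z) (gp w z y) with h2 | h2
    · rw [min_eq_left h2]; simp only [gp] at h2 ⊢; linarith
    · rw [min_eq_right h2]; simp only [gp] at h2 ⊢; linarith
  · rw [max_eq_left hm] at h
    rcases le_total (gp w x z) (gp w z y) with h2 | h2
    · rw [min_eq_left h2]; simp only [gp] at h2 ⊢; linarith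
    · rw [min_eq_right h2]; simp only [gp] at h2 ⊢; linarith

lemma line_gp_zero {σ : ℝ → X} (hσ : IsGeodesicLine σ) {s t u : ℝ}
    (hst : s ≤ t) (htu : t ≤ u) : gp (σ t) (σ s) (σ u) = 0 := by
  simp only [gp]
  rw [hσ t s, hσ t u, hσ s u,
    abs_of_nonneg (by linarith : (0:ℝ) ≤ t - s), abs_of_nonpos (by linarith : t - u ≤ 0),
    abs_of_nonpos (by linarith : s - u ≤ 0)]
  ring

/-- For any point `p` and geodesic from `a` to `b`, there is a point on the geodesic
within `(a|b)_p + 2δ` of `p`. -/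
lemma near_geo (hhyp : GromovHyperbolic X δ) {γ : ℝ → X} {a b : X}
    (hγ : IsGeodesicFromTo γ a b) (p : X) :
    ∃ s ∈ Set.Icc (0:ℝ) (dist a b),
      dist p (γ s) ≤ gp p a b + 2 * δ ∧ gp (γ s) a b = 0 := by
  have hmem : gp a p b ∈ Set.Icc (0:ℝ) (dist a b) := ⟨gp_nonneg a p b, gp_le_dist p a b⟩
  have h0mem : (0:ℝ) ∈ Set.Icc (0:ℝ) (dist a b) := ⟨le_refl _, dist_nonneg⟩
  have hdmem : dist a b ∈ Set.Icc (0:ℝ) (dist a b) := ⟨dist_nonneg, le_refl _⟩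
  set s₀ : ℝ := gp a p b with hs₀
  have hza : dist (γ s₀) a = s₀ := by
    have h := hγ.2.2 s₀ hmem 0 h0mem
    rw [hγ.1] at h
    rw [h, sub_zero, abs_of_nonneg hmem.1]
  have hzb : dist (γ s₀) b = dist a b - s₀ := by
    have h := hγ.2.2 s₀ hmem (dist a b) hdmem
    rw [hγ.2.1] at h
    rw [h, abs_of_nonpos (by linarith [hmem.2] : s₀ - dist a b ≤ 0), neg_sub]
  refine ⟨s₀, hmem, ?_, ?_⟩
  · have h := hhyp p a (γ s₀) b
    have e1 : dist a (γ s₀) = s₀ := by rw [dist_comm]; exact hza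
    have e4 : dist a p = dist p a := dist_comm _ _
    simp only [gp] at hs₀ ⊢
    rcases le_total (dist p a + dist (γ s₀) b) (dist p b + dist a (γ s₀)) with hm | hm
    · rw [max_eq_right hm] at h; rw [e1] at h; linarith [hzb]
    · rw [max_eq_left hm] at h; rw [hzb] at h; linarith
  · simp only [gp]
    rw [hza, hzb]
    ring

/-- A point close to a sub-segment of a geodesic line, up to the Gromov product. -/
lemma near_line (hhyp : GromovHyperbolic X δ) {σ : ℝ → X} (hσ : IsGeodesicLine σ)
    (a b : ℝ) (p : X) : ∃ u : ℝ, dist p (σ u) ≤ gp p (σ a) (σ b) + 2 * δ := by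
  rcases le_total a b with hab | hab
  · have hgeod : IsGeodesicFromTo (fun s => σ (a + s)) (σ a) (σ b) := by
      refine ⟨by simp, ?_, ?_⟩
      · have hd : dist (σ a) (σ b) = b - a := by
          rw [hσ a b, abs_of_nonpos (by linarith : a - b ≤ 0), neg_sub]
        rw [hd]; congr 1; ring
      · intro s _ t _
        rw [hσ]
        congr 1
        ring
    obtain ⟨s, _, hs, _⟩ := near_geo hhyp hgeod p
    exact ⟨a + s, hs⟩
  · have hgeod : IsGeodesicFromTo (fun s => σ (b + s)) (σ b) (σ a) := by
      refine ⟨by simp, ?_, ?_⟩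
      · have hd : dist (σ b) (σ a) = a - b := by
          rw [hσ b a, abs_of_nonpos (by linarith : b - a ≤ 0), neg_sub]
        rw [hd]; congr 1; ring
      · intro s _ t _
        rw [hσ]
        congr 1
        ring
    obtain ⟨s, _, hs, _⟩ := near_geo hhyp hgeod p
    rw [gp_comm] at hs
    exact ⟨b + s, hs⟩

/-- Two geodesic lines at finite "Hausdorff distance" are within `6δ` of each other. -/
lemma lineH (hδ : 0 ≤ δ) (hhyp : GromovHyperbolic X δ) (hgeo : GeodesicSpace X)
    {σ τ : ℝ → X} (hσ : IsGeodesicLine σ) (hτ : IsGeodesicLine τ) (C : ℝ)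
    (hC : ∀ t : ℝ, infDist (τ t) (Set.range σ) ≤ C) (t : ℝ) :
    infDist (τ t) (Set.range σ) ≤ 6 * δ := by
  have hne : (Set.range σ).Nonempty := ⟨σ 0, Set.mem_range_self 0⟩
  set C' : ℝ := max C 0 + 1 with hC'
  have hC'pos : (0:ℝ) < C' := by positivity
  have hCC' : C < C' := by
    rw [hC']
    have := le_max_left C 0
    linarith
  set R : ℝ := C' + 5 * δ + 1 with hR
  have hRpos : (0:ℝ) < R := by rw [hR]; linarith
  obtain ⟨qp, ⟨bpar, hbpar⟩, hqp⟩ :=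
    (Metric.infDist_lt_iff hne).mp (lt_of_le_of_lt (hC (t + R)) hCC')
  obtain ⟨qm, ⟨apar, hapar⟩, hqm⟩ :=
    (Metric.infDist_lt_iff hne).mp (lt_of_le_of_lt (hC (t - R)) hCC')
  have hdp1 : dist (τ t) (τ (t - R)) = R := by
    rw [hτ t (t - R), abs_of_nonneg (by linarith : (0:ℝ) ≤ t - (t - R))]
    ring
  have hdp2 : dist (τ t) (τ (t + R)) = R := by
    rw [hτ t (t + R), abs_of_nonpos (by linarith : t - (t + R) ≤ 0)]
    ring
  have h01 : gp (τ t) (τ (t - R)) (τ (t + R)) = 0 :=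
    line_gp_zero hτ (by linarith) (by linarith)
  have h1 := gp_hyp hhyp (τ t) (τ (t - R)) (τ (t + R)) qp
  rw [h01, zero_add] at h1
  have h2 : δ < gp (τ t) qp (τ (t + R)) := by
    have hge := gp_ge (τ t) (τ (t + R)) qp
    rw [gp_comm (τ t) (τ (t + R)) qp] at hge
    have : R - C' = 5 * δ + 1 := by rw [hR]; ring
    linarith [hdp2, hqp]
  have h3 : gp (τ t) (τ (t - R)) qp ≤ δ := by
    rcases le_total (gp (τ t) (τ (t - R)) qp) (gp (τ t) qp (τ (t + R))) with hm | hm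
    · rw [min_eq_left hm] at h1; linarith
    · rw [min_eq_right hm] at h1; linarith
  obtain ⟨γ, hγ⟩ := hgeo (τ (t - R)) qp
  obtain ⟨s₀, _, hz1, hz2⟩ := near_geo hhyp hγ (τ t)
  have hpz : dist (τ t) (γ s₀) ≤ 3 * δ := by linarith
  have h4 := gp_hyp hhyp (γ s₀) (τ (t - R)) qp qm
  rw [hz2, zero_add] at h4
  have h5 : δ < gp (γ s₀) (τ (t - R)) qm := by
    have hge := gp_ge (γ s₀) (τ (t - R)) qm
    have hzt : R - 3 * δ ≤ dist (γ s₀) (τ (t - R)) := by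
      have htri := dist_triangle (τ t) (γ s₀) (τ (t - R))
      linarith [hdp1]
    have : R - C' = 5 * δ + 1 := by rw [hR]; ring
    linarith [hqm]
  have h6 : gp (γ s₀) qm qp ≤ δ := by
    rcases le_total (gp (γ s₀) (τ (t - R)) qm) (gp (γ s₀) qm qp) with hm | hm
    · rw [min_eq_left hm] at h4; linarith
    · rw [min_eq_right hm] at h4; linarith
  obtain ⟨u, hu⟩ := near_line hhyp hσ apar bpar (γ s₀)
  rw [hapar, hbpar] at hu
  have hfin : dist (τ t) (σ u) ≤ 6 * δ := by
    have htri := dist_triangle (τ t) (γ s₀) (σ u)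
    linarith
  exact le_trans (Metric.infDist_le_dist_of_mem (Set.mem_range_self u)) hfin

lemma stepL {σ : ℝ → X} {f : X → X} (hf : Isometry f) {C : ℝ}
    (hC : ∀ t : ℝ, infDist (f (σ t)) (Set.range σ) ≤ C) (z : X) :
    infDist (f z) (Set.range σ) ≤ infDist z (Set.range σ) + C := by
  have hne : (Set.range σ).Nonempty := ⟨σ 0, Set.mem_range_self 0⟩
  refine le_of_forall_pos_le_add fun ε hε => ?_
  obtain ⟨w, ⟨u, hu⟩, hw⟩ := (Metric.infDist_lt_iff hne).mp
    (lt_add_of_le_of_pos (le_refl (infDist z (Set.range σ))) hε)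
  subst hu
  calc infDist (f z) (Set.range σ)
      ≤ infDist (f (σ u)) (Set.range σ) + dist (f z) (f (σ u)) :=
        Metric.infDist_le_infDist_add_dist
    _ ≤ C + dist z (σ u) := by rw [hf.dist_eq]; linarith [hC u]
    _ ≤ infDist z (Set.range σ) + C + ε := by linarith

lemma iterL {σ : ℝ → X} {f : X → X} (hf : Isometry f) {C : ℝ}
    (hC : ∀ t : ℝ, infDist (f (σ t)) (Set.range σ) ≤ C) :
    ∀ n : ℕ, ∀ t : ℝ, infDist (f^[n] (σ t)) (Set.range σ) ≤ n * C := by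
  intro n
  induction n with
  | zero =>
    intro t
    simp [Metric.infDist_zero_of_mem (Set.mem_range_self t)]
  | succ n ih =>
    intro t
    rw [Function.iterate_succ_apply']
    have h1 := stepL hf hC (f^[n] (σ t))
    have h2 := ih t
    push_cast
    linarith

/-- Isometries do not increase the inf-distance to the image set. -/
lemma infDist_image_le {f : X → X} (hf : Isometry f) {S : Set X} (hS : S.Nonempty)
    {x : X} {c : ℝ} (h : infDist x S ≤ c) : infDist (f x) (f '' S) ≤ c := by
  refine le_of_forall_pos_le_add fun ε hε => ?_
  obtain ⟨w, hw, hd⟩ := (Metric.infDist_lt_iff hS).mp (lt_add_of_le_of_pos h hε)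
  calc infDist (f x) (f '' S) ≤ dist (f x) (f w) :=
        Metric.infDist_le_dist_of_mem ⟨w, hw, rfl⟩
    _ ≤ c + ε := by rw [hf.dist_eq]; linarith

lemma gp_line_samesign {σ : ℝ → X} (hσ : IsGeodesicLine σ) (a b : ℝ)
    (hsign : (0 ≤ a ∧ 0 ≤ b) ∨ (a ≤ 0 ∧ b ≤ 0)) :
    min |a| |b| ≤ gp (σ 0) (σ a) (σ b) := by
  simp only [gp]
  rw [hσ 0 a, hσ 0 b, hσ a b, zero_sub, abs_neg, zero_sub, abs_neg]
  rcases hsign with ⟨ha, hb⟩ | ⟨ha, hb⟩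
  · rw [abs_of_nonneg ha, abs_of_nonneg hb]
    rcases le_total a b with hc | hc
    · rw [abs_of_nonpos (by linarith : a - b ≤ 0), min_eq_left hc]; linarith
    · rw [abs_of_nonneg (by linarith : 0 ≤ a - b), min_eq_right hc]; linarith
  · rw [abs_of_nonpos ha, abs_of_nonpos hb]
    rcases le_total a b with hc | hc
    · rw [abs_of_nonpos (by linarith : a - b ≤ 0), min_eq_right (by linarith : -b ≤ -a)]
      linarith
    · rw [abs_of_nonneg (by linarith : 0 ≤ a - b), min_eq_left (by linarith : -a ≤ -b)]
      linarith

/-- The key estimate. -/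
lemma key (hδ : 0 ≤ δ) (hhyp : GromovHyperbolic X δ) (hgeo : GeodesicSpace X)
    {α : ℝ} {Y : Set X} (hY : QuasiConvex α Y)
    {σ : ℝ → X} (hσ : IsGeodesicLine σ) {t s u E : ℝ} {a b : X}
    (ha : a ∈ Y) (hb : b ∈ Y) (hs : s ≤ t) (hu : t ≤ u)
    (hda : dist a (σ s) ≤ E) (hdb : dist b (σ u) ≤ E)
    (hsfar : E + δ < t - s) (hufar : E + 2 * δ < u - t) :
    Metric.infDist (σ t) Y ≤ α + 4 * δ := by
  have hdps : dist (σ t) (σ s) = t - s := by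
    rw [hσ t s, abs_of_nonneg (by linarith : (0:ℝ) ≤ t - s)]
  have hdpu : dist (σ t) (σ u) = u - t := by
    rw [hσ t u, abs_of_nonpos (by linarith : t - u ≤ 0), neg_sub]
  have h3 : δ < gp (σ t) (σ s) a := by
    have hge := gp_ge (σ t) (σ s) a
    have e : dist (σ s) a = dist a (σ s) := dist_comm _ _
    linarith
  have h6 : 2 * δ < gp (σ t) b (σ u) := by
    have hge := gp_ge (σ t) (σ u) b
    rw [gp_comm (σ t) (σ u) b] at hge
    have e : dist (σ u) b = dist b (σ u) := dist_comm _ _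
    linarith
  have h1 := gp_hyp hhyp (σ t) (σ s) (σ u) a
  rw [line_gp_zero hσ hs hu, zero_add] at h1
  have h4 : gp (σ t) a (σ u) ≤ δ := by
    rcases le_total (gp (σ t) (σ s) a) (gp (σ t) a (σ u)) with hm | hm
    · rw [min_eq_left hm] at h1; linarith
    · rw [min_eq_right hm] at h1; linarith
  have h5 := gp_hyp hhyp (σ t) a (σ u) b
  have h7 : gp (σ t) a b ≤ 2 * δ := by
    rcases le_total (gp (σ t) a b) (gp (σ t) b (σ u)) with hm | hm
    · rw [min_eq_left hm] at h5; linarith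
    · rw [min_eq_right hm] at h5; linarith
  obtain ⟨γ, hγ⟩ := hgeo a b
  obtain ⟨s₀, hs₀mem, hz1, _⟩ := near_geo hhyp hγ (σ t)
  have hq : Metric.infDist (γ s₀) Y ≤ α := hY a ha b hb γ hγ s₀ hs₀mem
  calc Metric.infDist (σ t) Y
      ≤ Metric.infDist (γ s₀) Y + dist (σ t) (γ s₀) :=
        Metric.infDist_le_infDist_add_dist
    _ ≤ α + 4 * δ := by linarith

end Aux

/-- Let `g` be a hyperbolic isometry of a proper geodesic `δ`-hyperbolic space `X`
(positive asymptotic translation length), and `σ` a bi-infinite geodesic joining the two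
fixed points `g⁻`, `g⁺` of `g` at infinity (expressed here by saying that `g∘σ` and `σ`
are at finite Hausdorff distance, which characterizes geodesics with the same endpoints).
If `Y` is a `g`-invariant `α`-quasi-convex subset of `X`, then `σ` is contained in the
`(α + 8δ)`-neighbourhood of `Y`. -/
theorem stmt_12 {X : Type*} [MetricSpace X] [ProperSpace X] (δ : ℝ) (hδ : 0 ≤ δ)
    (hhyp : GromovHyperbolic X δ) (hgeo : GeodesicSpace X)
    (g : X → X) (hiso : Isometry g) (hbij : Function.Bijective g)
    (hhypg : ∃ (x₀ : X) (L : ℝ), 0 < L ∧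
      Tendsto (fun n : ℕ => dist (g^[n] x₀) x₀ / n) atTop (nhds L))
    (σ : ℝ → X) (hσ : IsGeodesicLine σ)
    (hends : ∃ C : ℝ, ∀ t : ℝ, Metric.infDist (g (σ t)) (Set.range σ) ≤ C ∧
      Metric.infDist (σ t) (Set.range (g ∘ σ)) ≤ C)
    (α : ℝ) (hα : 0 ≤ α) (Y : Set X) (hY : QuasiConvex α Y) (hYne : Y.Nonempty)
    (hginv : g '' Y = Y) :
    ∀ t : ℝ, Metric.infDist (σ t) Y ≤ α + 8 * δ := by
  obtain ⟨C₀, hC₀⟩ := hends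
  obtain ⟨x₀, L, hL, hLt⟩ := hhypg
  obtain ⟨y₀, hy₀⟩ := hYne
  have hne : (Set.range σ).Nonempty := ⟨σ 0, Set.mem_range_self 0⟩
  -- the inverse isometry
  set e₀ : X ≃ X := Equiv.ofBijective g hbij with he₀
  set h : X → X := ⇑e₀.symm with hh
  have hgh : ∀ x, g (h x) = x := fun x => e₀.apply_symm_apply x
  have hhg : ∀ x, h (g x) = x := fun x => e₀.symm_apply_apply x
  have hisoh : Isometry h := Isometry.of_dist_eq fun x y => by
    calc dist (h x) (h y) = dist (g (h x)) (g (h y)) := (hiso.dist_eq _ _).symm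
      _ = dist x y := by rw [hgh, hgh]
  have hisogn : ∀ n : ℕ, Isometry (g^[n]) := by
    intro n
    induction n with
    | zero => simpa using isometry_id
    | succ n ih => rw [Function.iterate_succ']; exact hiso.comp ih
  have hisohn : ∀ n : ℕ, Isometry (h^[n]) := by
    intro n
    induction n with
    | zero => simpa using isometry_id
    | succ n ih => rw [Function.iterate_succ']; exact hisoh.comp ih
  have hghn : ∀ (n : ℕ) (x : X), g^[n] (h^[n] x) = x := by
    intro n
    induction n with
    | zero => simp
    | succ n ih =>
      intro x
      rw [Function.iterate_succ_apply h, Function.iterate_succ_apply' g, ih (h x), hgh]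
  -- iterated neighbourhood bounds
  have hCg : ∀ t : ℝ, Metric.infDist (g (σ t)) (Set.range σ) ≤ C₀ := fun t => (hC₀ t).1
  have hCh : ∀ t : ℝ, Metric.infDist (h (σ t)) (Set.range σ) ≤ C₀ := by
    intro t
    have himg := infDist_image_le hisoh ⟨g (σ 0), Set.mem_range_self 0⟩ (hC₀ t).2
    have hset : h '' Set.range (g ∘ σ) = Set.range σ := by
      rw [Set.range_comp, Set.image_image]
      simp [hhg]
    rwa [hset] at himg
  have hlinegn : ∀ n : ℕ, IsGeodesicLine (fun u => g^[n] (σ u)) := by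
    intro n s t
    rw [(hisogn n).dist_eq, hσ]
  have hlinehn : ∀ n : ℕ, IsGeodesicLine (fun u => h^[n] (σ u)) := by
    intro n s t
    rw [(hisohn n).dist_eq, hσ]
  have hg6 : ∀ (n : ℕ) (t : ℝ), Metric.infDist (g^[n] (σ t)) (Set.range σ) ≤ 6 * δ :=
    fun n t => lineH hδ hhyp hgeo hσ (hlinegn n) (n * C₀) (iterL hiso hCg n) t
  have hh6 : ∀ (n : ℕ) (t : ℝ), Metric.infDist (h^[n] (σ t)) (Set.range σ) ≤ 6 * δ :=
    fun n t => lineH hδ hhyp hgeo hσ (hlinehn n) (n * C₀) (iterL hisoh hCh n) t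
  -- invariance of Y under iterates
  have hYg : ∀ (n : ℕ) (y : X), y ∈ Y → g^[n] y ∈ Y := by
    intro n
    induction n with
    | zero => simp
    | succ n ih =>
      intro y hy
      rw [Function.iterate_succ_apply' g]
      rw [← hginv]
      exact ⟨_, ih y hy, rfl⟩
  have hYh1 : ∀ y : X, y ∈ Y → h y ∈ Y := by
    intro y hy
    rw [← hginv] at hy
    obtain ⟨w, hw, rfl⟩ := hy
    rwa [hhg]
  have hYh : ∀ (n : ℕ) (y : X), y ∈ Y → h^[n] y ∈ Y := by
    intro n
    induction n with
    | zero => simp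
    | succ n ih =>
      intro y hy
      rw [Function.iterate_succ_apply' h]
      exact hYh1 _ (ih y hy)
  -- the orbit of σ 0 goes to infinity
  have hgrow : Tendsto (fun m : ℕ => dist (σ 0) (g^[m] (σ 0))) atTop atTop := by
    have h1 : ∀ᶠ m : ℕ in atTop, (m : ℝ) * (L / 2) ≤ dist (g^[m] x₀) x₀ := by
      have h2 : ∀ᶠ m : ℕ in atTop, L / 2 < dist (g^[m] x₀) x₀ / m :=
        (tendsto_order.1 hLt).1 (L / 2) (by linarith)
      filter_upwards [h2, eventually_ge_atTop 1] with m hm hm1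
      have hmpos : (0 : ℝ) < m := by exact_mod_cast hm1
      rw [lt_div_iff₀ hmpos] at hm
      nlinarith
    have hlow : Tendsto (fun m : ℕ => (m : ℝ) * (L / 2) - 2 * dist (σ 0) x₀) atTop atTop := by
      apply tendsto_atTop_add_const_right
      exact (tendsto_natCast_atTop_atTop (R := ℝ)).atTop_mul_const (by linarith)
    apply tendsto_atTop_mono' atTop _ hlow
    filter_upwards [h1] with m hm
    have e1 : dist (g^[m] x₀) (g^[m] (σ 0)) = dist x₀ (σ 0) := (hisogn m).dist_eq _ _
    have t1 := dist_triangle (g^[m] x₀) (g^[m] (σ 0)) x₀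
    have t2 := dist_triangle (g^[m] (σ 0)) (σ 0) x₀
    have e2 : dist x₀ (σ 0) = dist (σ 0) x₀ := dist_comm _ _
    have e3 : dist (g^[m] (σ 0)) (σ 0) = dist (σ 0) (g^[m] (σ 0)) := dist_comm _ _
    linarith
  -- main argument
  intro t
  set e : ℝ := 6 * δ + 1 with he
  have hepos : 0 < e := by rw [he]; linarith
  set D : ℝ := dist y₀ (σ 0) with hD
  set E : ℝ := D + e with hE
  have hDpos : 0 ≤ D := dist_nonneg
  set Big : ℝ := |t| + E + 2 * δ + 1 with hBig
  obtain ⟨n, hn1, hn2⟩ : ∃ n : ℕ, Big + e ≤ dist (σ 0) (g^[n] (σ 0)) ∧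
      6 * e + 1 ≤ dist (σ 0) (g^[2 * n] (σ 0)) := by
    have htwo : Tendsto (fun n : ℕ => 2 * n) atTop atTop :=
      tendsto_atTop_mono (f := fun n : ℕ => n) (fun n => by show n ≤ 2 * n; omega) tendsto_id
    have h2 : Tendsto (fun n : ℕ => dist (σ 0) (g^[2 * n] (σ 0))) atTop atTop :=
      hgrow.comp htwo
    exact ((hgrow.eventually_ge_atTop (Big + e)).and (h2.eventually_ge_atTop (6 * e + 1))).exists
  set dn : ℝ := dist (σ 0) (g^[n] (σ 0)) with hdn
  -- points on σ close to the orbit points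
  obtain ⟨_, ⟨up, rfl⟩, hup⟩ := (Metric.infDist_lt_iff hne).mp
    (lt_of_le_of_lt (hg6 n 0) (by linarith : 6 * δ < e))
  obtain ⟨_, ⟨um, rfl⟩, hum⟩ := (Metric.infDist_lt_iff hne).mp
    (lt_of_le_of_lt (hh6 n 0) (by linarith : 6 * δ < e))
  -- distances from σ 0
  have hd_h : dist (σ 0) (h^[n] (σ 0)) = dn := by
    have h1 := (hisogn n).dist_eq (σ 0) (h^[n] (σ 0))
    rw [hghn n (σ 0)] at h1
    rw [← h1, dist_comm]
  have hd2 : dist (g^[n] (σ 0)) (h^[n] (σ 0)) = dist (σ 0) (g^[2 * n] (σ 0)) := by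
    have h1 := (hisogn n).dist_eq (g^[n] (σ 0)) (h^[n] (σ 0))
    rw [hghn n (σ 0)] at h1
    have h2 : g^[n] (g^[n] (σ 0)) = g^[2 * n] (σ 0) := by
      rw [two_mul, Function.iterate_add_apply]
    rw [h2] at h1
    rw [← h1, dist_comm]
  have habs_up : dist (σ 0) (σ up) = |up| := by
    rw [hσ 0 up, zero_sub, abs_neg]
  have habs_um : dist (σ 0) (σ um) = |um| := by
    rw [hσ 0 um, zero_sub, abs_neg]
  have hup_low : dn - e ≤ |up| := by
    have t1 := dist_triangle (σ 0) (σ up) (g^[n] (σ 0))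
    have e1 : dist (σ up) (g^[n] (σ 0)) = dist (g^[n] (σ 0)) (σ up) := dist_comm _ _
    rw [← habs_up]
    linarith
  have hum_low : dn - e ≤ |um| := by
    have t1 := dist_triangle (σ 0) (σ um) (h^[n] (σ 0))
    have e1 : dist (σ um) (h^[n] (σ 0)) = dist (h^[n] (σ 0)) (σ um) := dist_comm _ _
    rw [← habs_um]
    linarith [hd_h]
  have hup_big : Big ≤ |up| := by linarith
  have hum_big : Big ≤ |um| := by linarith
  have hBigpos : 0 < Big := by
    have := abs_nonneg t
    rw [hBig]; linarith
  -- same-sign case is impossible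
  have hopp : ¬ ((0 ≤ up ∧ 0 ≤ um) ∨ (up ≤ 0 ∧ um ≤ 0)) := by
    intro hsign
    have hmin := gp_line_samesign hσ up um hsign
    have hpert := gp_perturb (σ 0) (σ up) (σ um) (g^[n] (σ 0)) (h^[n] (σ 0))
    have hgpG : gp (σ 0) (g^[n] (σ 0)) (h^[n] (σ 0)) =
        (dn + dn - dist (σ 0) (g^[2 * n] (σ 0))) / 2 := by
      simp only [gp]
      rw [hd_h, hd2, hdn]
    have e1 : dist (σ up) (g^[n] (σ 0)) = dist (g^[n] (σ 0)) (σ up) := dist_comm _ _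
    have e2 : dist (σ um) (h^[n] (σ 0)) = dist (h^[n] (σ 0)) (σ um) := dist_comm _ _
    have hminlow : dn - e ≤ min |up| |um| := le_min hup_low hum_low
    -- min |up| |um| = min up um etc. handled in gp_line_samesign already
    rw [hgpG] at hpert
    have hd2big : 6 * e + 1 ≤ dist (σ 0) (g^[2 * n] (σ 0)) := hn2
    linarith [hminlow, hmin, hpert, e1 ▸ hup, e2 ▸ hum]
  -- signs are opposite; apply the key estimate
  have hED : dist (g^[n] y₀) (σ up) ≤ E := by
    have t1 := dist_triangle (g^[n] y₀) (g^[n] (σ 0)) (σ up)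
    have e1 : dist (g^[n] y₀) (g^[n] (σ 0)) = D := by rw [(hisogn n).dist_eq, hD]
    rw [hE]; linarith
  have hEDh : dist (h^[n] y₀) (σ um) ≤ E := by
    have t1 := dist_triangle (h^[n] y₀) (h^[n] (σ 0)) (σ um)
    have e1 : dist (h^[n] y₀) (h^[n] (σ 0)) = D := by rw [(hisohn n).dist_eq, hD]
    rw [hE]; linarith
  have hgY : g^[n] y₀ ∈ Y := hYg n y₀ hy₀
  have hhY : h^[n] y₀ ∈ Y := hYh n y₀ hy₀
  have habs_t1 : -|t| ≤ t := neg_abs_le t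
  have habs_t2 : t ≤ |t| := le_abs_self t
  rcases le_or_gt up 0 with hsu | hsu <;> rcases le_or_gt um 0 with hsm | hsm
  · exact absurd (Or.inr ⟨hsu, hsm⟩) hopp
  · -- up ≤ 0 < um : a = g^[n] y₀ on the left, b = h^[n] y₀ on the right
    have hup' : up ≤ -Big := by
      rw [abs_of_nonpos hsu] at hup_big; linarith
    have hum' : Big ≤ um := by
      rw [abs_of_nonneg (le_of_lt hsm)] at hum_big; linarith
    have hk := key hδ hhyp hgeo hY hσ (t := t) (s := up) (u := um)
      hgY hhY (by rw [hBig] at hup'; linarith) (by rw [hBig] at hum'; linarith)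
      hED hEDh (by rw [hBig] at hup'; linarith) (by rw [hBig] at hum'; linarith)
    linarith
  · -- um ≤ 0 < up
    have hum' : um ≤ -Big := by
      rw [abs_of_nonpos hsm] at hum_big; linarith
    have hup' : Big ≤ up := by
      rw [abs_of_nonneg (le_of_lt hsu)] at hup_big; linarith
    have hk := key hδ hhyp hgeo hY hσ (t := t) (s := um) (u := up)
      hhY hgY (by rw [hBig] at hum'; linarith) (by rw [hBig] at hup'; linarith)
      hEDh hED (by rw [hBig] at hum'; linarith) (by rw [hBig] at hup'; linarith)
    linarith
  · exact absurd (Or.inl ⟨le_of_lt hsu, le_of_lt hsm⟩) hopp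
end

section
/- Let G be a group acting properly cocompactly by isometries on a geodesic hyperbolic space, satisfying the small centralizers hypothesis (G non-elementary and every elementary subgroup cyclic). If h is a hyperbolic element of G, then h is not conjugate to h⁻¹ in G. -/
/-!
Suppose `g h g⁻¹ = h⁻¹`. Then `c = g ^ 2` commutes with `h`. For a large power `h ^ N` the orbit
`k ↦ h ^ (N k) • x` is a quasi-geodesic, and its translate by `c ^ j` stays at the constant
distance `d(c ^ j • x, x)` from it; by the Morse lemma the two orbits fellow-travel, so every
`c ^ j • x` lies within a uniform distance of the `h`-orbit of `x`. Properness of the action then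
yields `c ^ k = h ^ t` with `k ≥ 1`; conjugating by `g` gives `h ^ t = h ^ (-t)`, so `t = 0` and
`g` has finite order. Hence `⟨g⟩ ⊔ ⟨h⟩` contains `⟨h⟩` with finite index, so it is cyclic,
hence abelian, and `h = g h g⁻¹ = h⁻¹`, contradicting that `h` has infinite order.
-/

open Filter Pointwise

/-- A group is virtually cyclic (the notion of an elementary subgroup of a hyperbolic
group) if it has a cyclic subgroup of finite index. -/
def IsVirtuallyCyclic (E : Type*) [Group E] : Prop :=
  ∃ C : Subgroup E, IsCyclic C ∧ C.FiniteIndex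

section GromovProduct

variable {X : Type*} [MetricSpace X] {δ : ℝ}

/-- The Gromov product `(y | z)_w` of `y` and `z` seen from `w`. -/
noncomputable def gromovProduct (w y z : X) : ℝ := (dist y w + dist z w - dist y z) / 2

theorem gromovProduct_comm (w y z : X) : gromovProduct w y z = gromovProduct w z y := by
  unfold gromovProduct; rw [dist_comm y z]; ring

theorem dist_sub_dist_le_gromovProduct (w y z : X) :
    dist y w - dist y z ≤ gromovProduct w y z := by
  unfold gromovProduct; linarith [dist_triangle y z w]

theorem gromovProduct_le_add_dist (w w' y z : X) :
    gromovProduct w y z ≤ gromovProduct w' y z + dist w w' := by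
  unfold gromovProduct; linarith [dist_triangle y w' w, dist_triangle z w' w, dist_comm w w']

theorem GromovHyperbolic.min_gromovProduct_le (hX : GromovHyperbolic X δ) (w y z u : X) :
    min (gromovProduct w y u) (gromovProduct w u z) ≤ gromovProduct w y z + δ := by
  have H := hX y u z w
  unfold gromovProduct
  rcases le_total (dist y u + dist z w) (dist y w + dist u z) with hc | hc
  · rw [max_eq_right hc] at H
    exact min_le_of_right_le (by linarith [dist_comm u z])
  · rw [max_eq_left hc] at H
    exact min_le_of_left_le (by linarith)

theorem GromovHyperbolic.gromovProduct_le_of_le_of_lt (hX : GromovHyperbolic X δ) {w y z u : X}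
    {A : ℝ} (hyz : gromovProduct w y z ≤ A) (huz : A + δ < gromovProduct w u z) :
    gromovProduct w y u ≤ A + δ := by
  have := hX.min_gromovProduct_le w y z u
  rcases min_le_iff.mp this with h | h <;> linarith

theorem GromovHyperbolic.gromovProduct_le_of_lt_dist_sub_dist (hX : GromovHyperbolic X δ)
    {w y z y' z' : X} {A : ℝ} (hyz : gromovProduct w y z ≤ A)
    (hy : A + δ < dist y w - dist y y') (hz : A + 2 * δ < dist z w - dist z z') :
    gromovProduct w y' z' ≤ A + 2 * δ := by
  have h₁ := hX.gromovProduct_le_of_le_of_lt ((gromovProduct_comm w z y).trans_le hyz) (u := y')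
    (by linarith [dist_sub_dist_le_gromovProduct w y y', gromovProduct_comm w y y'])
  have h₂ := hX.gromovProduct_le_of_le_of_lt ((gromovProduct_comm w y' z).trans_le h₁) (u := z')
    (by linarith [dist_sub_dist_le_gromovProduct w z z', gromovProduct_comm w z z'])
  linarith

end GromovProduct

namespace IsGeodesicFromTo

variable {X : Type*} [MetricSpace X] {γ : ℝ → X} {x y : X}

theorem dist_left (hγ : IsGeodesicFromTo γ x y) {t : ℝ} (ht : t ∈ Set.Icc 0 (dist x y)) :
    dist (γ t) x = t := by
  rw [← hγ.1, hγ.2.2 t ht 0 ⟨le_rfl, dist_nonneg⟩, sub_zero, abs_of_nonneg ht.1]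

theorem dist_right (hγ : IsGeodesicFromTo γ x y) {t : ℝ} (ht : t ∈ Set.Icc 0 (dist x y)) :
    dist (γ t) y = dist x y - t := by
  conv_lhs => rw [← hγ.2.1]
  rw [hγ.2.2 t ht _ ⟨dist_nonneg, le_rfl⟩, abs_of_nonpos (by linarith [ht.2]), neg_sub]

theorem gromovProduct_eq_zero (hγ : IsGeodesicFromTo γ x y) {s t u : ℝ}
    (hs : s ∈ Set.Icc 0 (dist x y)) (hu : u ∈ Set.Icc 0 (dist x y)) (hst : s ≤ t) (htu : t ≤ u) :
    gromovProduct (γ t) (γ s) (γ u) = 0 := by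
  have ht : t ∈ Set.Icc 0 (dist x y) := ⟨hs.1.trans hst, htu.trans hu.2⟩
  unfold gromovProduct
  rw [hγ.2.2 s hs t ht, hγ.2.2 u hu t ht, hγ.2.2 s hs u hu, abs_of_nonpos (by linarith),
    abs_of_nonneg (by linarith), abs_of_nonpos (by linarith)]
  ring

theorem continuousOn (hγ : IsGeodesicFromTo γ x y) : ContinuousOn γ (Set.Icc 0 (dist x y)) :=
  (LipschitzOnWith.of_dist_le_mul (K := 1) fun s hs t ht => by
    rw [hγ.2.2 s hs t ht, NNReal.coe_one, one_mul, Real.dist_eq]).continuousOn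

/-- The nearby geodesic point is the one at distance `(w | y)_x` from `x`. -/
theorem exists_dist_le (hX : GromovHyperbolic X δ) (hγ : IsGeodesicFromTo γ x y) (w : X) :
    ∃ t ∈ Set.Icc 0 (dist x y), dist w (γ t) ≤ gromovProduct w x y + 2 * δ := by
  set t := gromovProduct x w y
  have ht : t ∈ Set.Icc 0 (dist x y) := by
    constructor <;> unfold t gromovProduct <;>
      linarith [dist_triangle w x y, dist_triangle w y x, dist_comm x y]
  refine ⟨t, ht, ?_⟩
  have h1 := hγ.dist_left ht
  have h2 := hγ.dist_right ht
  have hmin := hX.min_gromovProduct_le x w (γ t) y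
  have hyt : gromovProduct x y (γ t) = t := by
    unfold gromovProduct; rw [dist_comm y (γ t), h1, h2, dist_comm y x]; ring
  rw [hyt, min_self] at hmin
  have e1 : gromovProduct x w (γ t) = (dist w x + t - dist w (γ t)) / 2 := by
    unfold gromovProduct; rw [h1]
  have e2 : gromovProduct w x y = dist w x - t := by
    unfold t gromovProduct; rw [dist_comm x w, dist_comm y w, dist_comm y x]; ring
  linarith

end IsGeodesicFromTo

section Chains

variable {X : Type*} [MetricSpace X] {δ : ℝ}

theorem GromovHyperbolic.exists_dist_le_of_dist_succ_le (hX : GromovHyperbolic X δ) (hδ : 0 ≤ δ)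
    {q : ℤ → X} {G : ℝ} (hq : ∀ i, dist (q i) (q (i + 1)) ≤ G) (w : X) (a b : ℤ) :
    ∃ i ∈ Set.uIcc a b, dist w (q i) ≤ gromovProduct w (q a) (q b) + G + δ * |(b - a : ℝ)| := by
  wlog hab : a ≤ b generalizing a b
  · obtain ⟨i, hi, h⟩ := this b a (le_of_not_ge hab)
    exact ⟨i, Set.uIcc_comm a b ▸ hi, by rwa [gromovProduct_comm, abs_sub_comm]⟩
  rw [abs_of_nonneg (by exact_mod_cast sub_nonneg.mpr hab), Set.uIcc_of_le hab]
  induction b, hab using Int.leInduction with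
  | base =>
    refine ⟨a, ⟨le_rfl, le_rfl⟩, ?_⟩
    have h := dist_sub_dist_le_gromovProduct w (q a) (q a)
    rw [dist_self, sub_zero, dist_comm] at h
    simp only [sub_self, mul_zero]
    linarith [dist_nonneg.trans (hq a)]
  | succ b hab ih =>
    obtain ⟨i, hi, hwi⟩ := ih
    have hδb : 0 ≤ δ * (b - a) := mul_nonneg hδ (by exact_mod_cast sub_nonneg.mpr hab)
    push_cast
    rcases min_le_iff.mp (hX.min_gromovProduct_le w (q a) (q (b + 1)) (q b)) with h | h
    · exact ⟨i, ⟨hi.1, hi.2.trans (Int.le_add_one le_rfl)⟩, by linarith⟩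
    · refine ⟨b, ⟨hab, Int.le_add_one le_rfl⟩, ?_⟩
      have := dist_sub_dist_le_gromovProduct w (q b) (q (b + 1))
      rw [dist_comm] at this
      linarith [hq b]

/-- A quasi-geodesic with constants `(M, 2M)`, sampled at the integers. -/
structure IsQuasiGeodesicChain (M : ℝ) (S : ℤ → X) : Prop where
  le_dist : ∀ i j : ℤ, M * |(i - j : ℝ)| ≤ dist (S i) (S j)
  dist_le : ∀ i j : ℤ, dist (S i) (S j) ≤ 2 * M * |(i - j : ℝ)|

namespace IsQuasiGeodesicChain

variable {M : ℝ} {S P : ℤ → X}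

theorem dist_succ_le (hS : IsQuasiGeodesicChain M S) (i : ℤ) : dist (S i) (S (i + 1)) ≤ 2 * M := by
  simpa using hS.dist_le i (i + 1)

/-- Suppose every point of `γ` is `D`-close to the chain but `w = γ t₀` is not closer. The points
of `γ` at distance `2D` before and after `w` (or the endpoints of `γ`) are `D`-closer to chain
points `S a'`, `S b'` than to `w`, so two `δ`-cuts give `(S a' | S b')_w ≤ 2δ`. As
`|a' - b'| ≤ 6D / M`, the chain from `S a'` to `S b'` passes within `2δ + 2M + 6Dδ / M` of `w`. -/
theorem le_of_forall_dist_le (hX : GromovHyperbolic X δ) (hδ : 0 ≤ δ) (hδM : 100 * δ ≤ M)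
    (hS : IsQuasiGeodesicChain M S) {a b : ℤ} (hab : a ≤ b) {γ : ℝ → X}
    (hγ : IsGeodesicFromTo γ (S a) (S b)) {D t₀ : ℝ}
    (hD : ∀ s ∈ Set.Icc 0 (dist (S a) (S b)), ∃ i ∈ Set.Icc a b, dist (γ s) (S i) ≤ D)
    (ht₀ : t₀ ∈ Set.Icc 0 (dist (S a) (S b)))
    (hfar : ∀ i ∈ Set.Icc a b, D ≤ dist (γ t₀) (S i)) : D ≤ 3 * M := by
  by_contra! hD3
  set ℓ := dist (S a) (S b)
  set w := γ t₀
  have hDa : D ≤ t₀ := (hfar a ⟨le_rfl, hab⟩).trans (hγ.dist_left ht₀).le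
  have hDb : D ≤ ℓ - t₀ := (hfar b ⟨hab, le_rfl⟩).trans (hγ.dist_right ht₀).le
  obtain ⟨tm, htm, hmt₀, hmD, a', ha', hma'⟩ : ∃ tm ∈ Set.Icc 0 ℓ, tm ≤ t₀ ∧ t₀ - tm ≤ 2 * D ∧
      ∃ a' ∈ Set.Icc a b, D ≤ (t₀ - tm) - dist (γ tm) (S a') := by
    by_cases h : 2 * D ≤ t₀
    · have hs : t₀ - 2 * D ∈ Set.Icc 0 ℓ := ⟨by linarith, by linarith [ht₀.2]⟩
      obtain ⟨a', ha', hd⟩ := hD _ hs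
      exact ⟨_, hs, by linarith, by linarith, a', ha', by linarith⟩
    · refine ⟨0, Set.left_mem_Icc.2 dist_nonneg, ht₀.1, by linarith, a, ⟨le_rfl, hab⟩, ?_⟩
      rw [hγ.1, dist_self]
      linarith
  obtain ⟨tp, htp, ht₀p, hpD, b', hb', hpb'⟩ : ∃ tp ∈ Set.Icc 0 ℓ, t₀ ≤ tp ∧ tp - t₀ ≤ 2 * D ∧
      ∃ b' ∈ Set.Icc a b, D ≤ (tp - t₀) - dist (γ tp) (S b') := by
    by_cases h : t₀ + 2 * D ≤ ℓ
    · have hs : t₀ + 2 * D ∈ Set.Icc 0 ℓ := ⟨by linarith [ht₀.1], h⟩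
      obtain ⟨b', hb', hd⟩ := hD _ hs
      exact ⟨_, hs, by linarith, by linarith, b', hb', by linarith⟩
    · refine ⟨ℓ, Set.right_mem_Icc.2 dist_nonneg, ht₀.2, by linarith, b, ⟨hab, le_rfl⟩, ?_⟩
      rw [hγ.2.1, dist_self]
      linarith
  have hdm : dist (γ tm) w = t₀ - tm := by
    rw [hγ.2.2 tm htm t₀ ht₀, abs_of_nonpos (by linarith), neg_sub]
  have hdp : dist (γ tp) w = tp - t₀ := by
    rw [hγ.2.2 tp htp t₀ ht₀, abs_of_nonneg (by linarith)]
  have hcut := hX.gromovProduct_le_of_lt_dist_sub_dist (y' := S a') (z' := S b')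
    (hγ.gromovProduct_eq_zero htm htp hmt₀ ht₀p).le (by linarith) (by linarith)
  obtain ⟨i, hi, hwi⟩ := hX.exists_dist_le_of_dist_succ_le hδ hS.dist_succ_le w a' b'
  have hsep : M * |(b' - a' : ℝ)| ≤ 6 * D := by
    have := dist_triangle4 (S b') (γ tp) (γ tm) (S a')
    rw [hγ.2.2 tp htp tm htm, abs_of_nonneg (by linarith)] at this
    linarith [hS.le_dist b' a', dist_comm (S b') (γ tp)]
  have : 100 * (δ * |(b' - a' : ℝ)|) ≤ M * |(b' - a' : ℝ)| := by
    rw [← mul_assoc]; exact mul_le_mul_of_nonneg_right hδM (abs_nonneg _)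
  linarith [hfar i (Set.uIcc_subset_Icc ha' hb' hi)]

theorem exists_dist_le_of_isGeodesicFromTo (hX : GromovHyperbolic X δ) (hδ : 0 ≤ δ)
    (hδM : 100 * δ ≤ M) (hS : IsQuasiGeodesicChain M S) {a b : ℤ} (hab : a ≤ b) {γ : ℝ → X}
    (hγ : IsGeodesicFromTo γ (S a) (S b)) {t : ℝ} (ht : t ∈ Set.Icc 0 (dist (S a) (S b))) :
    ∃ i ∈ Set.Icc a b, dist (γ t) (S i) ≤ 3 * M := by
  set T := S '' Set.Icc a b
  have hT : IsCompact T := ((Set.finite_Icc a b).image S).isCompact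
  have hF : ∀ s, ∃ i ∈ Set.Icc a b, dist (γ s) (S i) = Metric.infDist (γ s) T := fun s => by
    obtain ⟨_, ⟨i, hi, rfl⟩, h⟩ :=
      hT.exists_infDist_eq_dist ⟨S a, a, ⟨le_rfl, hab⟩, rfl⟩ (γ s)
    exact ⟨i, hi, h.symm⟩
  obtain ⟨t₀, ht₀, hmax⟩ := isCompact_Icc.exists_isMaxOn (Set.nonempty_Icc.2 dist_nonneg)
    ((Metric.continuous_infDist_pt T).comp_continuousOn hγ.continuousOn)
  have hmax : ∀ s ∈ Set.Icc 0 (dist (S a) (S b)),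
      Metric.infDist (γ s) T ≤ Metric.infDist (γ t₀) T := isMaxOn_iff.mp hmax
  have hD := hS.le_of_forall_dist_le hX hδ hδM hab hγ
    (fun s hs => let ⟨i, hi, h⟩ := hF s; ⟨i, hi, h.trans_le (hmax s hs)⟩) ht₀
    (fun i hi => Metric.infDist_le_dist_of_mem ⟨i, hi, rfl⟩)
  obtain ⟨i, hi, h⟩ := hF t
  exact ⟨i, hi, h.trans_le ((hmax t ht).trans hD)⟩

/-- Along `γ` the indices of `3M`-close chain points pass from `a` to `b`; as `Icc` is connected,
some point of `γ` is close both to an index `≤ i` and to an index `≥ i`. -/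
theorem exists_dist_le_of_le_of_le (hX : GromovHyperbolic X δ) (hδ : 0 ≤ δ) (hδM : 100 * δ ≤ M)
    (hS : IsQuasiGeodesicChain M S) {a i b : ℤ} (hai : a ≤ i) (hib : i ≤ b) {γ : ℝ → X}
    (hγ : IsGeodesicFromTo γ (S a) (S b)) :
    ∃ t ∈ Set.Icc 0 (dist (S a) (S b)), ∃ j ≤ i, ∃ k, i ≤ k ∧
      dist (γ t) (S j) ≤ 3 * M ∧ dist (γ t) (S k) ≤ 3 * M := by
  have hM : 0 ≤ M := by linarith
  set I := Set.Icc 0 (dist (S a) (S b))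
  set near : Set ℤ → Set ℝ := fun J => I ∩ γ ⁻¹' ⋃ j ∈ J, Metric.closedBall (S j) (3 * M)
  have hclosed : ∀ J : Set ℤ, J.Finite → IsClosed (near J) := fun J hJ =>
    hγ.continuousOn.preimage_isClosed_of_isClosed isClosed_Icc
      (hJ.isClosed_biUnion fun _ _ => Metric.isClosed_closedBall)
  have hmem : ∀ {J : Set ℤ} {s : ℝ} {j : ℤ}, s ∈ I → j ∈ J → dist (γ s) (S j) ≤ 3 * M →
      s ∈ near J := fun hs hj h =>
    ⟨hs, Set.mem_biUnion hj (Metric.mem_closedBall.mpr h)⟩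
  have hcover : I ⊆ near (Set.Icc a i) ∪ near (Set.Icc i b) := fun s hs => by
    obtain ⟨j, hj, h⟩ := hS.exists_dist_le_of_isGeodesicFromTo hX hδ hδM (hai.trans hib) hγ hs
    rcases le_total j i with hji | hij
    · exact Or.inl (hmem hs ⟨hj.1, hji⟩ h)
    · exact Or.inr (hmem hs ⟨hij, hj.2⟩ h)
  have h0 : (I ∩ near (Set.Icc a i)).Nonempty :=
    ⟨0, Set.left_mem_Icc.2 dist_nonneg, hmem (Set.left_mem_Icc.2 dist_nonneg) ⟨le_rfl, hai⟩
      (by rw [hγ.1, dist_self]; positivity)⟩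
  have hℓ : (I ∩ near (Set.Icc i b)).Nonempty :=
    ⟨_, Set.right_mem_Icc.2 dist_nonneg, hmem (Set.right_mem_Icc.2 dist_nonneg) ⟨hib, le_rfl⟩
      (by rw [hγ.2.1, dist_self]; positivity)⟩
  obtain ⟨t, -, ⟨ht, hj⟩, ⟨-, hk⟩⟩ := isPreconnected_closed_iff.mp isPreconnected_Icc _ _
    (hclosed _ (Set.finite_Icc a i)) (hclosed _ (Set.finite_Icc i b)) hcover h0 hℓ
  simp only [Set.mem_preimage, Set.mem_iUnion, Metric.mem_closedBall, exists_prop] at hj hk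
  obtain ⟨j, ⟨-, hji⟩, hj⟩ := hj
  obtain ⟨k, ⟨hik, -⟩, hk⟩ := hk
  exact ⟨t, ht, j, hji, k, hik, hj, hk⟩

/-- The point of a geodesic from `S a` to `S b` given by `exists_dist_le_of_le_of_le` is `3M`-close
to `S j` and `S k` with `j ≤ i ≤ k`, so `k - j ≤ 6` and it is `15M`-close to `S i`. -/
theorem gromovProduct_le (hX : GromovHyperbolic X δ) (hgeo : GeodesicSpace X) (hδ : 0 ≤ δ)
    (hδM : 100 * δ ≤ M) (hS : IsQuasiGeodesicChain M S) {a i b : ℤ} (hai : a ≤ i) (hib : i ≤ b) :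
    gromovProduct (S i) (S a) (S b) ≤ 15 * M := by
  obtain ⟨γ, hγ⟩ := hgeo (S a) (S b)
  obtain ⟨t, ht, j, hji, k, hik, hj, hk⟩ := hS.exists_dist_le_of_le_of_le hX hδ hδM hai hib hγ
  have hjk : M * (k - j) ≤ 6 * M := by
    have := hS.le_dist k j
    rw [abs_of_nonneg (by exact_mod_cast sub_nonneg.mpr (hji.trans hik))] at this
    linarith [dist_triangle (S k) (γ t) (S j), dist_comm (S k) (γ t)]
  have hij : M * (i - j) ≤ M * (k - j) :=
    mul_le_mul_of_nonneg_left (by exact_mod_cast sub_le_sub_right hik _) (by linarith)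
  have hSij := hS.dist_le i j
  rw [abs_of_nonneg (by exact_mod_cast sub_nonneg.mpr hji)] at hSij
  have hzero := hγ.gromovProduct_eq_zero (Set.left_mem_Icc.2 dist_nonneg)
    (Set.right_mem_Icc.2 dist_nonneg) ht.1 ht.2
  rw [hγ.1, hγ.2.1] at hzero
  linarith [gromovProduct_le_add_dist (S i) (γ t) (S a) (S b), dist_triangle (S i) (S j) (γ t),
    dist_comm (S j) (γ t)]

/-- Two chains which are `r`-close at indices `a` and `b` fellow-travel in between: `P i` lies
`15M`-close to geodesics from `P a` to `P b`, and as `P a`, `P b` are much farther than `r` from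
`P i`, two `δ`-cuts move it to geodesics from `S a` to `S b`, which lie `3M`-close to `S`. -/
theorem exists_dist_le_of_dist_le (hX : GromovHyperbolic X δ) (hgeo : GeodesicSpace X)
    (hδ : 0 ≤ δ) (hδM : 100 * δ ≤ M) (hS : IsQuasiGeodesicChain M S)
    (hP : IsQuasiGeodesicChain M P) {a i b : ℤ} {r : ℝ} (ha : dist (P a) (S a) ≤ r)
    (hb : dist (P b) (S b) ≤ r) (hia : r + 16 * M < M * (i - a)) (hbi : r + 16 * M < M * (b - i)) :
    ∃ j, dist (P i) (S j) ≤ 19 * M := by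
  have hM : 0 ≤ M := by linarith
  have hr : 0 ≤ r := dist_nonneg.trans ha
  have hai : a ≤ i := by
    by_contra! h
    nlinarith [(sub_neg.mpr (Int.cast_lt.mpr h) : (i : ℝ) - a < 0)]
  have hib : i ≤ b := by
    by_contra! h
    nlinarith [(sub_neg.mpr (Int.cast_lt.mpr h) : (b : ℝ) - i < 0)]
  set w := P i
  have hPa : M * (i - a) ≤ dist (P a) w := by
    have := hP.le_dist a i
    rw [abs_sub_comm] at this
    exact (mul_le_mul_of_nonneg_left (le_abs_self _) hM).trans this
  have hPb : M * (b - i) ≤ dist (P b) w :=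
    (mul_le_mul_of_nonneg_left (le_abs_self _) hM).trans (hP.le_dist b i)
  have hcut := hX.gromovProduct_le_of_lt_dist_sub_dist (y' := S a) (z' := S b)
    (hP.gromovProduct_le hX hgeo hδ hδM hai hib) (by linarith) (by linarith)
  obtain ⟨γ, hγ⟩ := hgeo (S a) (S b)
  obtain ⟨t, ht, hwt⟩ := hγ.exists_dist_le hX w
  obtain ⟨j, -, hj⟩ := hS.exists_dist_le_of_isGeodesicFromTo hX hδ hδM (hai.trans hib) hγ ht
  exact ⟨j, by linarith [dist_triangle w (γ t) (S j)]⟩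

end IsQuasiGeodesicChain

end Chains

section IsometricAction

variable {G X : Type*} [Group G] [MetricSpace X] [MulAction G X] [IsIsometricSMul G X]

theorem dist_zpow_smul_zpow_smul (g : G) (x : X) (i j : ℤ) :
    dist (g ^ i • x) (g ^ j • x) = dist (g ^ (i - j) • x) x := by
  conv_rhs => rw [← dist_smul (g ^ j), smul_smul, ← zpow_add, add_sub_cancel]

theorem dist_zpow_smul_eq_natAbs (g : G) (x : X) (k : ℤ) :
    dist (g ^ k • x) x = dist (g ^ k.natAbs • x) x := by
  obtain ⟨n, rfl | rfl⟩ := Int.eq_nat_or_neg k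
  · simp
  · rw [Int.natAbs_neg, Int.natAbs_natCast, zpow_neg, zpow_natCast, ← dist_smul (g ^ n),
      smul_inv_smul, dist_comm]

theorem subadditive_dist_pow_smul (g : G) (x : X) : Subadditive fun n => dist (g ^ n • x) x :=
  fun m n => by
    show dist (g ^ (m + n) • x) x ≤ dist (g ^ m • x) x + dist (g ^ n • x) x
    rw [pow_add, mul_smul]
    linarith [dist_triangle (g ^ m • g ^ n • x) (g ^ m • x) x, dist_smul (g ^ m) (g ^ n • x) x]

theorem mul_le_dist_pow_smul {g : G} {x : X} {L : ℝ}
    (hL : Tendsto (fun n : ℕ => dist (g ^ n • x) x / n) atTop (nhds L)) (n : ℕ) :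
    L * n ≤ dist (g ^ n • x) x := by
  rcases Nat.eq_zero_or_pos n with rfl | hn
  · simp
  have hsub := subadditive_dist_pow_smul g x
  have hbdd : BddBelow (Set.range fun n : ℕ => dist (g ^ n • x) x / n) :=
    ⟨0, by rintro _ ⟨n, rfl⟩; positivity⟩
  rw [tendsto_nhds_unique hL (hsub.tendsto_lim hbdd), ← le_div_iff₀ (by exact_mod_cast hn)]
  exact hsub.lim_le_div hbdd hn.ne'

theorem not_isOfFinOrder_of_tendsto {g : G} {x : X} {L : ℝ} (hL0 : 0 < L)
    (hL : Tendsto (fun n : ℕ => dist (g ^ n • x) x / n) atTop (nhds L)) : ¬IsOfFinOrder g := by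
  intro hg
  obtain ⟨n, hn, hgn⟩ := isOfFinOrder_iff_pow_eq_one.mp hg
  have := mul_le_dist_pow_smul hL n
  rw [hgn, one_smul, dist_self] at this
  have : (0 : ℝ) < n := by exact_mod_cast hn
  nlinarith

theorem isQuasiGeodesicChain_zpow_smul {g : G} {x : X} {M : ℝ}
    (hlow : ∀ n : ℕ, M * n ≤ dist (g ^ n • x) x) (hstep : dist (g • x) x ≤ 2 * M) :
    IsQuasiGeodesicChain M fun k : ℤ => g ^ k • x := by
  have habs : ∀ i j : ℤ, (((i - j).natAbs : ℕ) : ℝ) = |(i - j : ℝ)| := fun i j => by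
    rw [Nat.cast_natAbs, Int.cast_abs]; push_cast; rfl
  refine ⟨fun i j => ?_, fun i j => ?_⟩ <;>
    simp only [dist_zpow_smul_zpow_smul, dist_zpow_smul_eq_natAbs, ← habs]
  · exact hlow _
  · have := (subadditive_dist_pow_smul g x).apply_mul_add_le (i - j).natAbs 1 0
    simp only [mul_one, add_zero, pow_one, pow_zero, one_smul, dist_self] at this
    nlinarith [(Nat.cast_nonneg _ : (0 : ℝ) ≤ (i - j).natAbs)]

theorem exists_isQuasiGeodesicChain_pow_smul {g : G} {x : X} {L : ℝ} (hL0 : 0 < L)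
    (hL : Tendsto (fun n : ℕ => dist (g ^ n • x) x / n) atTop (nhds L)) (C : ℝ) :
    ∃ N : ℕ, 0 < N ∧ C ≤ N * L ∧ IsQuasiGeodesicChain (N * L) fun k : ℤ => (g ^ N) ^ k • x := by
  obtain ⟨N, hN, hNL, hCN⟩ := ((eventually_gt_atTop 0).and
    ((hL.eventually (gt_mem_nhds (by linarith : L < 2 * L))).and
      ((tendsto_natCast_atTop_atTop.atTop_mul_const hL0).eventually_ge_atTop C))).exists
  refine ⟨N, hN, hCN, isQuasiGeodesicChain_zpow_smul (fun n => ?_) ?_⟩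
  · rw [← pow_mul]
    have := mul_le_dist_pow_smul hL (N * n)
    push_cast at this
    linarith
  · rw [div_lt_iff₀ (by exact_mod_cast hN)] at hNL
    linarith

/-- As `c` commutes with `g`, the chain `k ↦ c • g ^ k • x` stays at distance `d(c • x, x)` from
the orbit of `x`; fellow-travelling between the indices `±m`, `m` large, puts `c • x` near it. -/
theorem exists_dist_smul_zpow_smul_le {δ M : ℝ} (hX : GromovHyperbolic X δ)
    (hgeo : GeodesicSpace X) (hδ : 0 ≤ δ) (hδM : 100 * δ ≤ M) (hM : 0 < M) {g c : G} {x : X}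
    (hS : IsQuasiGeodesicChain M fun k : ℤ => g ^ k • x) (hc : Commute g c) :
    ∃ z : ℤ, dist (c • x) (g ^ z • x) ≤ 19 * M := by
  have hP : IsQuasiGeodesicChain M fun k : ℤ => c • g ^ k • x :=
    ⟨fun i j => by simpa only [dist_smul] using hS.le_dist i j,
      fun i j => by simpa only [dist_smul] using hS.dist_le i j⟩
  have hPS : ∀ k : ℤ, dist (c • g ^ k • x) (g ^ k • x) = dist (c • x) x := fun k => by
    rw [smul_smul, ← (hc.zpow_left k).eq, mul_smul, dist_smul]
  obtain ⟨m, hm⟩ := exists_nat_gt ((dist (c • x) x + 16 * M) / M)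
  rw [div_lt_iff₀ hM] at hm
  obtain ⟨j, hj⟩ := hS.exists_dist_le_of_dist_le hX hgeo hδ hδM hP (a := -m) (i := 0) (b := m)
    (hPS _).le (hPS _).le (by push_cast; linarith) (by push_cast; linarith)
  exact ⟨j, by simpa using hj⟩

/-- By properness only finitely many elements `g ^ (-z) * c ^ j` move `x` by at most `R`. -/
theorem exists_pow_eq_zpow_of_dist_le [ProperSpace X]
    (hproper : ∀ K : Set X, IsCompact K → {g : G | (g • K ∩ K).Nonempty}.Finite) {c g : G}
    {x : X} {R : ℝ} (h : ∀ j : ℕ, ∃ z : ℤ, dist (c ^ j • x) (g ^ z • x) ≤ R) :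
    ∃ k : ℕ, 0 < k ∧ ∃ t : ℤ, c ^ k = g ^ t := by
  choose z hz using h
  set K := Metric.closedBall x R
  have hU : ∀ j, (g ^ z j)⁻¹ * c ^ j ∈ {u : G | (u • K ∩ K).Nonempty} := fun j => by
    refine ⟨_, Set.smul_mem_smul_set (Metric.mem_closedBall_self (dist_nonneg.trans (hz 0))), ?_⟩
    rw [Metric.mem_closedBall, ← dist_smul (g ^ z j), smul_smul, mul_inv_cancel_left]
    exact hz j
  obtain ⟨j, j', hjj', heq⟩ :=
    Set.Finite.exists_lt_map_eq_of_forall_mem hU (hproper K (isCompact_closedBall x R))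
  refine ⟨j' - j, by omega, z j' - z j, ?_⟩
  have : c ^ j' = g ^ z j' * (g ^ z j)⁻¹ * c ^ j := by rw [mul_assoc, heq]; group
  rw [pow_sub c hjj'.le, zpow_sub, this]
  group

end IsometricAction

section GroupTheory

variable {G : Type*} [Group G]

theorem commute_sq_of_mul_mul_inv_eq_inv {g h : G} (hgh : g * h * g⁻¹ = h⁻¹) :
    Commute (g ^ 2) h := by
  have h₁ : SemiconjBy g h h⁻¹ := by rw [SemiconjBy, ← hgh, inv_mul_cancel_right]
  have h₂ : SemiconjBy g h⁻¹ h := by simpa using h₁.inv_right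
  rw [sq]
  exact h₂.mul_left h₁

theorem zpowers_le_normalizer_of_mul_mul_inv_eq_inv {g h : G} (hgh : g * h * g⁻¹ = h⁻¹) :
    Subgroup.zpowers g ≤ Subgroup.normalizer (Subgroup.zpowers h : Set G) := by
  rw [Subgroup.zpowers_le, Subgroup.mem_normalizer_iff_map_conj_eq, MonoidHom.map_zpowers]
  simp [hgh]

theorem isVirtuallyCyclic_sup_of_le_normalizer {H N : Subgroup G} [Finite H] [IsCyclic N]
    (hHN : H ≤ Subgroup.normalizer (N : Set G)) : IsVirtuallyCyclic ↥(H ⊔ N) := by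
  refine ⟨N.subgroupOf (H ⊔ N), (Subgroup.subgroupOfEquivOfLe le_sup_right).isCyclic.mpr ‹_›, ?_⟩
  have : Finite (↥(H ⊔ N) ⧸ N.subgroupOf (H ⊔ N)) := by
    refine Finite.of_surjective (fun u : H => QuotientGroup.mk ⟨u, (le_sup_left : H ≤ H ⊔ N) u.2⟩)
      fun q => ?_
    obtain ⟨⟨e, he⟩, rfl⟩ := QuotientGroup.mk_surjective q
    have he' : e ∈ (H : Set G) * N := by
      rwa [← Subgroup.coe_mul_of_left_le_normalizer_right H N hHN]
    obtain ⟨u, hu, n, hn, rfl⟩ := he'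
    refine ⟨⟨u, hu⟩, QuotientGroup.eq.mpr ?_⟩
    simpa [Subgroup.mem_subgroupOf] using hn
  exact Subgroup.finiteIndex_of_finite_quotient

/-- Conjugating `(g ^ 2) ^ k = h ^ t` by `g` gives `h ^ t = h ^ (-t)`, so `t = 0`. -/
theorem isOfFinOrder_of_mul_mul_inv_eq_inv {g h : G} (hh : ¬IsOfFinOrder h)
    (hgh : g * h * g⁻¹ = h⁻¹) {k : ℕ} (hk : 0 < k) {t : ℤ} (hkt : (g ^ 2) ^ k = h ^ t) :
    IsOfFinOrder g := by
  have hconj : g * (g ^ 2) ^ k * g⁻¹ = (g ^ 2) ^ k := by group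
  rw [hkt, ← conj_zpow, hgh, ← zpow_neg_one, ← zpow_mul] at hconj
  have ht : t = 0 := by
    have := injective_zpow_iff_not_isOfFinOrder.mpr hh hconj
    omega
  rw [ht, zpow_zero, ← pow_mul] at hkt
  exact isOfFinOrder_iff_pow_eq_one.mpr ⟨2 * k, by omega, hkt⟩

theorem sq_eq_one_of_mul_mul_inv_eq_inv
    (hsc : ∀ E : Subgroup G, IsVirtuallyCyclic E → IsCyclic E) {g h : G} (hg : IsOfFinOrder g)
    (hgh : g * h * g⁻¹ = h⁻¹) : h ^ 2 = 1 := by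
  have : Finite (Subgroup.zpowers g) := (finite_zpowers.mpr hg).to_subtype
  have hE := hsc _ (isVirtuallyCyclic_sup_of_le_normalizer
    (zpowers_le_normalizer_of_mul_mul_inv_eq_inv hgh))
  let := hE.commGroup
  have hcomm := mul_comm (G := ↥(Subgroup.zpowers g ⊔ Subgroup.zpowers h))
    ⟨g, Subgroup.mem_sup_left (Subgroup.mem_zpowers g)⟩
    ⟨h, Subgroup.mem_sup_right (Subgroup.mem_zpowers h)⟩
  rw [Subtype.ext_iff] at hcomm
  push_cast at hcomm
  rw [sq, ← mul_inv_cancel h, ← hgh, hcomm, mul_inv_cancel_right]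

end GroupTheory

theorem stmt_13_general {G X : Type*} [Group G] [MetricSpace X] [ProperSpace X]
    [MulAction G X] (δ : ℝ) (hδ : 0 ≤ δ)
    (hhyp : GromovHyperbolic X δ) (hgeo : GeodesicSpace X)
    (hisom : ∀ g : G, Isometry (fun x : X => g • x))
    (hproper : ∀ K : Set X, IsCompact K → {g : G | (g • K ∩ K).Nonempty}.Finite)
    (hsc : ∀ E : Subgroup G, IsVirtuallyCyclic E → IsCyclic E)
    (h : G)
    (hhyper : ∃ (x : X) (L : ℝ), 0 < L ∧
      Tendsto (fun n : ℕ => dist ((h ^ n) • x) x / n) atTop (nhds L)) :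
    ∀ g : G, g * h * g⁻¹ ≠ h⁻¹ := by
  intro g hgh
  have : IsIsometricSMul G X := ⟨hisom⟩
  obtain ⟨x, L, hL, hlim⟩ := hhyper
  have hh := not_isOfFinOrder_of_tendsto hL hlim
  obtain ⟨N, hN, hδM, hS⟩ := exists_isQuasiGeodesicChain_pow_smul hL hlim (100 * δ)
  have hM : 0 < N * L := mul_pos (by exact_mod_cast hN) hL
  have hcomm := ((commute_sq_of_mul_mul_inv_eq_inv hgh).pow_right N).symm
  obtain ⟨k, hk, t, hkt⟩ := exists_pow_eq_zpow_of_dist_le hproper fun j =>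
    exists_dist_smul_zpow_smul_le hhyp hgeo hδ hδM hM hS (hcomm.pow_right j)
  rw [← zpow_natCast h N, ← zpow_mul] at hkt
  have hg := isOfFinOrder_of_mul_mul_inv_eq_inv hh hgh hk hkt
  exact hh <| isOfFinOrder_iff_pow_eq_one.mpr
    ⟨2, two_pos, sq_eq_one_of_mul_mul_inv_eq_inv hsc hg hgh⟩

/-- Let `G` act properly cocompactly by isometries on a proper geodesic `δ`-hyperbolic
space `X`, and assume the small centralizers hypothesis (`G` is non-elementary and every
elementary subgroup of `G` is cyclic). Then a hyperbolic element `h` of `G` (one with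
positive asymptotic translation length) is not conjugate to its inverse. -/
theorem stmt_13 {G X : Type*} [Group G] [MetricSpace X] [ProperSpace X]
    [MulAction G X] (δ : ℝ) (hδ : 0 ≤ δ)
    (hhyp : GromovHyperbolic X δ) (hgeo : GeodesicSpace X)
    (hisom : ∀ g : G, Isometry (fun x : X => g • x))
    (hproper : ∀ K : Set X, IsCompact K → {g : G | (g • K ∩ K).Nonempty}.Finite)
    (hcocompact : ∃ K : Set X, IsCompact K ∧ ⋃ g : G, g • K = Set.univ)
    (hne : ¬ IsVirtuallyCyclic G)
    (hsc : ∀ E : Subgroup G, IsVirtuallyCyclic E → IsCyclic E)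
    (h : G)
    (hhyper : ∃ (x : X) (L : ℝ), 0 < L ∧
      Tendsto (fun n : ℕ => dist ((h ^ n) • x) x / n) atTop (nhds L)) :
    ∀ g : G, g * h * g⁻¹ ≠ h⁻¹ :=
  stmt_13_general δ hδ hhyp hgeo hisom hproper hsc h hhyper
end
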